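/- arXiv:1404.0147 — 3 statements merged into one kernel-verified Lean document; each statement's English description precedes it below -/
import Mathlib

section
/- Suppose f₀ is partially captive. Then for any δ > 0 there exists n_δ ∈ ℕ such that for every n ≥ n_δ one can find ε(n) > 0 such that esssup_ω |log N(ε;ω,n)/n| < δ for all 0 ≤ ε < ε(n). -/
open MeasureTheory Filter Topology
open scoped ENNReal

noncomputable section

namespace RPE

variable {Ω : Type*}

/-! ## The circle and the torus -/

/-- The circle `S¹ = ℝ/ℤ`. -/
abbrev S1 := AddCircle (1 : ℝ)

/-- The torus `𝕋² = S¹ × S¹`. -/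
abbrev T2 := S1 × S1

instance : Fact ((0:ℝ) < 1) := ⟨one_pos⟩

/-- The representative in `[0,1)` of a point of the circle. -/
def lift01 (x : S1) : ℝ := (AddCircle.equivIco 1 0 x).1

/-- The circle map induced by a lift `F : ℝ → ℝ`. -/
def circMap (F : ℝ → ℝ) (x : S1) : S1 := (F (lift01 x) : ℝ)

/-- The skew product `f(x,s) = (E x mod 1, s + τ(x)/(2π) mod 1)` defined through lifts. -/
def skewMap (E τ : ℝ → ℝ) (z : T2) : T2 :=
  ((E (lift01 z.1) : ℝ), z.2 + ((τ (lift01 z.1) / (2 * Real.pi) : ℝ) : S1))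

/-- The fiber iterates `f^{(n)}(ω) = f(θ^{n-1}ω) ∘ ⋯ ∘ f(ω)` of the random skew product. -/
def iterSkew (θ : Ω → Ω) (E τ : Ω → ℝ → ℝ) : ℕ → Ω → T2 → T2
  | 0, _, z => z
  | n + 1, ω, z => iterSkew θ E τ n (θ ω) (skewMap (E ω) (τ ω) z)

/-- `C^∞` functions on the torus, via doubly periodic smooth lifts. -/
def SmoothT2 (φ : T2 → ℂ) : Prop :=
  ∃ Φ : ℝ × ℝ → ℂ, ContDiff ℝ (⊤ : ℕ∞) Φ ∧
    (∀ x s : ℝ, Φ (x + 1, s) = Φ (x, s) ∧ Φ (x, s + 1) = Φ (x, s)) ∧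
    ∀ x s : ℝ, φ ((x : S1), (s : S1)) = Φ (x, s)

/-! ## Cocycles and transfer operators (on lifts) -/

/-- Forward cocycle of (lifted) expanding maps: `E^{(n)}(ω) = E(θ^{n-1}ω) ∘ ⋯ ∘ E(ω)`. -/
def iterE (θ : Ω → Ω) (E : Ω → ℝ → ℝ) : ℕ → Ω → ℝ → ℝ
  | 0, _, x => x
  | n + 1, ω, x => iterE θ E n (θ ω) (E ω x)

/-- Birkhoff-type sum `τ^{(n)}(ω,x) = ∑_{j<n} τ(θ^jω, E^{(j)}(ω,x))`. -/
def iterTau (θ : Ω → Ω) (E τ : Ω → ℝ → ℝ) (n : ℕ) (ω : Ω) (x : ℝ) : ℝ :=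
  ∑ j ∈ Finset.range n, τ (θ^[j] ω) (iterE θ E j ω x)

/-- The composition (Koopman) operator `M_{ν,n}(ω)φ = e^{iν τ^{(n)}(ω,·)} φ ∘ E^{(n)}(ω)`. -/
def transferM (θ : Ω → Ω) (E τ : Ω → ℝ → ℝ) (ν : ℤ) (n : ℕ) (ω : Ω) (φ : ℝ → ℂ) (x : ℝ) : ℂ :=
  Complex.exp (Complex.I * ν * (iterTau θ E τ n ω x)) * φ (iterE θ E n ω x)

/-- The reduced Perron–Frobenius transfer operator
`M*_{ν,n}(ω)φ(x) = ∑_{E^{(n)}(ω,y)=x} e^{-iν τ^{(n)}(ω,y)} φ(y)/(dE^{(n)}(ω,y)/dy)`,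
realized on lifts: the preimages of `x` are `(E^{(n)}(ω))^{-1}(x+a)`, `a = 0,…,kⁿ-1`. -/
def transferStar (k : ℕ) (θ : Ω → Ω) (E τ : Ω → ℝ → ℝ) (ν : ℤ) (n : ℕ) (ω : Ω)
    (φ : ℝ → ℂ) (x : ℝ) : ℂ :=
  ∑ a ∈ Finset.range (k ^ n),
    Complex.exp (-(Complex.I * ν * iterTau θ E τ n ω (Function.invFun (iterE θ E n ω) (x + a))))
      * φ (Function.invFun (iterE θ E n ω) (x + a))
      / Complex.ofReal (deriv (iterE θ E n ω) (Function.invFun (iterE θ E n ω) (x + a)))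

/-! ## Sobolev norms via Fourier coefficients -/

/-- Fourier coefficient of a 1-periodic function, at frequency `ξ = 2πn`. -/
def fourierC (u : ℝ → ℂ) (n : ℤ) : ℂ :=
  ∫ x in (0:ℝ)..1, u x * Complex.exp (-(2 * Real.pi * n * x) * Complex.I)

/-- Squared Sobolev norm `‖u‖²_{(m)} = ∑_{ξ∈2πℤ} (1+|ξ|²)^m |û(ξ)|²`. -/
def sobNormSq (m : ℕ) (u : ℝ → ℂ) : ℝ :=
  ∑' n : ℤ, (1 + (2 * Real.pi * n) ^ 2) ^ m * ‖fourierC u n‖ ^ 2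

/-- Squared `ν`-dependent Sobolev norm `‖u‖²_{H^m_ν} = ∑_{ξ∈2πℤ} |⟨ξ/ν⟩^m û(ξ)|²`. -/
def sobNuNormSq (m : ℕ) (ν : ℤ) (u : ℝ → ℂ) : ℝ :=
  ∑' n : ℤ, (1 + (2 * Real.pi * n / ν) ^ 2) ^ m * ‖fourierC u n‖ ^ 2

/-- Smooth functions on the circle, viewed as smooth 1-periodic functions on `ℝ`. -/
def SmoothPeriodic (u : ℝ → ℂ) : Prop :=
  ContDiff ℝ (⊤ : ℕ∞) u ∧ Function.Periodic u 1

/-- Membership in `H^m(S¹)`, via summability of the Sobolev series. -/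
def sobInH (m : ℕ) (u : ℝ → ℂ) : Prop :=
  Summable fun n : ℤ => (1 + (2 * Real.pi * n) ^ 2) ^ m * ‖fourierC u n‖ ^ 2

/-- Operator norm on `H^m(S¹)` (computed over the dense subspace of smooth functions). -/
def opNormH (m : ℕ) (T : (ℝ → ℂ) → ℝ → ℂ) : ℝ :=
  ⨆ φ : {φ : ℝ → ℂ // SmoothPeriodic φ ∧ sobNormSq m φ ≤ 1}, Real.sqrt (sobNormSq m (T φ.1))

/-- Index of compactness (ball measure of noncompactness) of an operator on `H^m(S¹)`. -/
def icNormH (m : ℕ) (T : (ℝ → ℂ) → ℝ → ℂ) : ℝ :=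
  sInf {r : ℝ | 0 < r ∧ ∃ s : Finset (ℝ → ℂ), ∀ φ : ℝ → ℂ, SmoothPeriodic φ → sobNormSq m φ ≤ 1 →
    ∃ v ∈ s, Real.sqrt (sobNormSq m fun x => T φ x - v x) ≤ r}

/-! ## Canonical maps on the cotangent bundle and trajectory counts -/

/-- The canonical map `F_j : (y,η) ↦ (x_j, E'(x_j)η + τ'(x_j))`, where
`x_j = g^{-1}((y+j)/k) = E^{-1}(y+j)` on lifts. -/
def canMap (E τ : ℝ → ℝ) (j : ℕ) (p : ℝ × ℝ) : ℝ × ℝ :=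
  (Function.invFun E (p.1 + j),
    deriv E (Function.invFun E (p.1 + j)) * p.2 + deriv τ (Function.invFun E (p.1 + j)))

/-- Random trajectory branch `F_α^{(n)}(ω) = F_{α_n}(ω) ∘ F_{α_{n-1}}(θω) ∘ ⋯ ∘ F_{α_1}(θ^{n-1}ω)`. -/
def canTraj (θ : Ω → Ω) (E τ : Ω → ℝ → ℝ) : (n : ℕ) → (Fin n → ℕ) → Ω → ℝ × ℝ → ℝ × ℝ
  | 0, _, _, p => p
  | n + 1, α, ω, p =>
      canMap (E ω) (τ ω) (α (Fin.last n)) (canTraj θ E τ n (fun i => α i.castSucc) (θ ω) p)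

/-- Number of branches issued from `p` which lie in `Z = S¹ × [-R,R]` at time `n`. -/
def trajCount (k : ℕ) (θ : Ω → Ω) (E τ : Ω → ℝ → ℝ) (R : ℝ) (n : ℕ) (ω : Ω) (p : ℝ × ℝ) : ℕ :=
  Nat.card {α : Fin n → Fin k // |(canTraj θ E τ n (fun i => (α i : ℕ)) ω p).2| ≤ R}

/-- `N(ε;ω,n)`: the maximal number of non-escaping branches over starting points in `Z`. -/
def Ncount (k : ℕ) (θ : Ω → Ω) (E τ : Ω → ℝ → ℝ) (R : ℝ) (n : ℕ) (ω : Ω) : ℕ :=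
  sSup {c : ℕ | ∃ p : ℝ × ℝ, |p.2| ≤ R ∧ trajCount k θ E τ R n ω p = c}

/-- Deterministic (unperturbed) non-escaping branch count `N(0;n)`. -/
def NcountD (k : ℕ) (E₀ τ₀ : ℝ → ℝ) (R : ℝ) (n : ℕ) : ℕ :=
  Ncount k (id : Unit → Unit) (fun _ => E₀) (fun _ => τ₀) R n ()

/-- Partial captivity of the unperturbed map: `lim (1/n) log N(0;n) = 0`. -/
def PartiallyCaptive (k : ℕ) (E₀ τ₀ : ℝ → ℝ) (R : ℝ) : Prop :=
  Tendsto (fun n : ℕ => Real.log (NcountD k E₀ τ₀ R n) / n) atTop (nhds 0)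

/-! ## Lifted dynamics, the invariant section `S`, and the trapped counts `Ñ` -/

/-- Backward cocycle `G^{(n)}(ω) = G(ω) ∘ G(θω) ∘ ⋯ ∘ G(θ^{n-1}ω)`, `G(ω) = E(ω)^{-1}`. -/
def iterG (θ : Ω → Ω) (E : Ω → ℝ → ℝ) : ℕ → Ω → ℝ → ℝ
  | 0, _, x => x
  | n + 1, ω, x => Function.invFun (E ω) (iterG θ E n (θ ω) x)

/-- The lifted dynamics `F̃(ε;ω) : (y,η) ↦ (x, E'(ω,x)η + τ'(ω,x))` with `x = E(ω)^{-1}(y)`. -/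
def liftF (E τ : ℝ → ℝ) (p : ℝ × ℝ) : ℝ × ℝ :=
  (Function.invFun E p.1,
    deriv E (Function.invFun E p.1) * p.2 + deriv τ (Function.invFun E p.1))

/-- Backward cocycle `F̃^{(n)}(ε;ω) = F̃(ε;ω) ∘ F̃(ε;θω) ∘ ⋯ ∘ F̃(ε;θ^{n-1}ω)`. -/
def iterLiftF (θ : Ω → Ω) (E τ : Ω → ℝ → ℝ) : ℕ → Ω → ℝ × ℝ → ℝ × ℝ
  | 0, _, p => p
  | n + 1, ω, p => liftF (E ω) (τ ω) (iterLiftF θ E τ n (θ ω) p)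

/-- `S_ε(ω,x) = -∑_{j≥1} τ'(θ^{-j}ω, G^{(j)}(θ^{-j}ω,x)) ⋅ dG^{(j)}(θ^{-j}ω,x)/dx`. -/
def stableS (θ θinv : Ω → Ω) (E τ : Ω → ℝ → ℝ) (ω : Ω) (x : ℝ) : ℝ :=
  -∑' j : ℕ,
    deriv (τ (θinv^[j + 1] ω)) (iterG θ E (j + 1) (θinv^[j + 1] ω) x)
      * deriv (fun y => iterG θ E (j + 1) (θinv^[j + 1] ω) y) x

/-- Cardinality of `Ã_R(ε;ω,n)(y,η)`. -/
def tilACard (k : ℕ) (θ θinv : Ω → Ω) (E τ : Ω → ℝ → ℝ) (R : ℝ) (n : ℕ) (ω : Ω)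
    (p : ℝ × ℝ) : ℕ :=
  Nat.card {a : Fin (k ^ n) //
    |p.2 - stableS θ θinv E τ (θ^[n] ω) (p.1 + ((a : ℕ) : ℝ))|
      ≤ R * deriv (fun y => iterG θ E n ω y) (p.1 + ((a : ℕ) : ℝ))}

/-- `Ñ_R(ε;ω,n) = sup_{(y,η)∈ℝ²} #Ã_R(ε;ω,n)(y,η)`. -/
def tilN (k : ℕ) (θ θinv : Ω → Ω) (E τ : Ω → ℝ → ℝ) (R : ℝ) (n : ℕ) (ω : Ω) : ℕ :=
  sSup {c : ℕ | ∃ p : ℝ × ℝ, tilACard k θ θinv E τ R n ω p = c}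

/-- Deterministic (unperturbed) version `Ñ_R(0;n)`. -/
def tilND (k : ℕ) (E₀ τ₀ : ℝ → ℝ) (R : ℝ) (n : ℕ) : ℕ :=
  tilN k (id : Unit → Unit) id (fun _ => E₀) (fun _ => τ₀) R n ()

/-! ## Correlation functions -/

/-- Quenched operational correlation function
`Cor^{op}_{φ,ψ}(ω,n) = ∫ φ∘f^{(n)}(ω)·ψ̄ dxds - ∫ φ dμ_{θⁿω} ∫ ψ̄ dxds`,
where `dμ_ω = h(ω,x) dxds`. -/
def corOp (θ : Ω → Ω) (E τ : Ω → ℝ → ℝ) (h : Ω → ℝ → ℝ) (φ ψ : T2 → ℂ) (ω : Ω) (n : ℕ) : ℂ :=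
  (∫ z : T2, φ (iterSkew θ E τ n ω z) * starRingEnd ℂ (ψ z))
    - (∫ z : T2, φ z * (h (θ^[n] ω) (lift01 z.1) : ℂ)) * ∫ z : T2, starRingEnd ℂ (ψ z)

/-- Quenched classical correlation function
`Cor^{cl}_{φ,ψ}(ω,n) = ∫ φ∘f^{(n)}(ω)·ψ̄ dμ_ω - ∫ φ dμ_{θⁿω} ∫ ψ̄ dμ_ω`. -/
def corCl (θ : Ω → Ω) (E τ : Ω → ℝ → ℝ) (h : Ω → ℝ → ℝ) (φ ψ : T2 → ℂ) (ω : Ω) (n : ℕ) : ℂ :=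
  (∫ z : T2, φ (iterSkew θ E τ n ω z) * starRingEnd ℂ (ψ z) * (h ω (lift01 z.1) : ℂ))
    - (∫ z : T2, φ z * (h (θ^[n] ω) (lift01 z.1) : ℂ))
      * ∫ z : T2, starRingEnd ℂ (ψ z) * (h ω (lift01 z.1) : ℂ)

/-! ## Semiclassical pseudodifferential calculus on `S¹` -/

/-- Semiclassical (toroidal) quantization of a symbol. -/
def quantize (h : ℝ) (a : ℝ → ℝ → ℂ) (u : ℝ → ℂ) (x : ℝ) : ℂ :=
  ∑' n : ℤ, a x (h * (2 * Real.pi * n)) * fourierC u n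
    * Complex.exp ((2 * Real.pi * n * x) * Complex.I)

/-- Fourier multiplier with (real) weight `w`, semiclassical parameter `h`. -/
def multiplierOp (w : ℝ → ℝ) (h : ℝ) (u : ℝ → ℂ) (x : ℝ) : ℂ :=
  ∑' n : ℤ, (w (h * (2 * Real.pi * n)) : ℂ) * fourierC u n
    * Complex.exp ((2 * Real.pi * n * x) * Complex.I)

/-- Mixed derivative `∂_ξ^α D_x^β a` (up to a unimodular factor) of a symbol. -/
def symDeriv (a : ℝ → ℝ → ℂ) (α β : ℕ) (x ξ : ℝ) : ℂ :=
  iteratedDeriv α (fun ξ' => iteratedDeriv β (fun x' => a x' ξ') x) ξ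

/-- The symbol class `S^m(T^*(S¹))`: smooth, 1-periodic in `x`, with symbol estimates. -/
def IsSymbol (m : ℝ) (a : ℝ → ℝ → ℂ) : Prop :=
  ContDiff ℝ (⊤ : ℕ∞) (fun p : ℝ × ℝ => a p.1 p.2) ∧
  (∀ x ξ : ℝ, a (x + 1) ξ = a x ξ) ∧
  ∀ α β : ℕ, ∃ C : ℝ, ∀ x ξ : ℝ, ‖symDeriv a α β x ξ‖ ≤ C * (1 + |ξ|) ^ (m - (α : ℝ))

/-- Condition (𝒜(m)) for a family of symbols depending on `(ε, ω, n, h)`: for every `ℓ`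
there are `ε₀ > 0` (independent of `n`) and constants `C n` such that the `ℓ`-th symbol
semi-norms are a.s. bounded by `C n`, uniformly in `ε ∈ [0,ε₀)` and `0 < h ≤ 1`. -/
def CondA [MeasurableSpace Ω] (P : Measure Ω) (m : ℝ)
    (a : ℝ → Ω → ℕ → ℝ → ℝ → ℝ → ℂ) : Prop :=
  ∀ ℓ : ℕ, ∃ ε₀ : ℝ, 0 < ε₀ ∧ ∃ C : ℕ → ℝ,
    ∀ ε : ℝ, 0 ≤ ε → ε < ε₀ → ∀ n : ℕ, ∀ h : ℝ, 0 < h → h ≤ 1 →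
      ∀ᵐ ω ∂P, ∀ α β : ℕ, α + β ≤ ℓ →
        ∀ x ξ : ℝ, ‖symDeriv (a ε ω n h) α β x ξ‖ ≤ C n * (1 + |ξ|) ^ (m - (α : ℝ))

/-- Sup norm of a (complex) symbol over `T^*(S¹)`. -/
def supSym (a : ℝ → ℝ → ℂ) : ℝ := ⨆ x : ℝ, ⨆ ξ : ℝ, ‖a x ξ‖

/-- Sup norm of a real symbol over `T^*(S¹)`. -/
def supSymR (a : ℝ → ℝ → ℝ) : ℝ := ⨆ x : ℝ, ⨆ ξ : ℝ, |a x ξ|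

/-- Squared `L²(S¹)` norm. -/
def l2NormSq (u : ℝ → ℂ) : ℝ := ∫ x in (0:ℝ)..1, ‖u x‖ ^ 2

/-- `L²(S¹)` inner product. -/
def l2Inner (u v : ℝ → ℂ) : ℂ := ∫ x in (0:ℝ)..1, u x * starRingEnd ℂ (v x)

/-- The principal symbol
`p_n(ω,y,η) = ∑_α (a_m²(y,η)/a_m²(F_α^{(n)}(ω,y,η))) ⋅ dG_α^{(n)}(ω,y)/dy`. -/
def pSym (k : ℕ) (θ : Ω → Ω) (E τ : Ω → ℝ → ℝ) (am : ℝ → ℝ) (n : ℕ) (ω : Ω)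
    (y η : ℝ) : ℝ :=
  ∑ α : Fin n → Fin k,
    (am η) ^ 2 / (am (canTraj θ E τ n (fun i => (α i : ℕ)) ω (y, η)).2) ^ 2
      * deriv (fun y' => (canTraj θ E τ n (fun i => (α i : ℕ)) ω (y', η)).1) y

/-- `P_n(ω) = (Q_{ν,n}(ω))^* Q_{ν,n}(ω) = A_m M*_{ν,n}(ω) A_m^{-2} M_{ν,n}(ω) A_m`,
where `A_m = a_m(hD)` and `h = 1/ν`. -/
def Pop (k : ℕ) (θ : Ω → Ω) (E τ : Ω → ℝ → ℝ) (am : ℝ → ℝ) (ν : ℤ) (n : ℕ) (ω : Ω)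
    (u : ℝ → ℂ) : ℝ → ℂ :=
  multiplierOp am (1 / (ν : ℝ)) <|
    transferStar k θ E τ ν n ω <|
      multiplierOp (fun ξ => ((am ξ) ^ 2)⁻¹) (1 / (ν : ℝ)) <|
        transferM θ E τ ν n ω <|
          multiplierOp am (1 / (ν : ℝ)) u

/-- `Q_{ν,n}(ω) = A_m^{-1} M_{ν,n}(ω) A_m`. -/
def Qop (k : ℕ) (θ : Ω → Ω) (E τ : Ω → ℝ → ℝ) (am : ℝ → ℝ) (ν : ℤ) (n : ℕ) (ω : Ω)
    (u : ℝ → ℂ) : ℝ → ℂ :=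
  multiplierOp (fun ξ => (am ξ)⁻¹) (1 / (ν : ℝ)) <|
    transferM θ E τ ν n ω <|
      multiplierOp am (1 / (ν : ℝ)) u

/-! ## Transversality (linear base) -/

/-- Jacobian of the skew product over the linear expanding map, at a point of the circle. -/
def jac1 (k : ℕ) (τ₀ : ℝ → ℝ) (x : S1) : Matrix (Fin 2) (Fin 2) ℝ :=
  !![(k : ℝ), 0; deriv τ₀ (lift01 x) / (2 * Real.pi), 1]

/-- Jacobian `Df₀ⁿ` of the iterated skew product (it depends only on the base point). -/
def jacN (k : ℕ) (τ₀ : ℝ → ℝ) : ℕ → S1 → Matrix (Fin 2) (Fin 2) ℝ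
  | 0, _ => 1
  | n + 1, x => jacN k τ₀ n (circMap (fun t => (k : ℝ) * t) x) * jac1 k τ₀ x

/-- A `2×2` matrix acting on `ℝ²`. -/
def mulVec2 (M : Matrix (Fin 2) (Fin 2) ℝ) (p : ℝ × ℝ) : ℝ × ℝ :=
  (M 0 0 * p.1 + M 0 1 * p.2, M 1 0 * p.1 + M 1 1 * p.2)

/-- The cone `𝒦_t = {(ξ,η) : |η| ≤ t|ξ|}`. -/
def cone (t : ℝ) : Set (ℝ × ℝ) := {p | |p.2| ≤ t * |p.1|}

/-- Transversality `ζ ⋔ w`: the images of the cone `𝒦_R` (with `ϑ_R = R/(λ₀-1)`, `λ₀ = k`)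
under `Df₀ⁿ(ζ)` and `Df₀ⁿ(w)` meet only at `0`. -/
def Transversal (k : ℕ) (τ₀ : ℝ → ℝ) (R : ℝ) (n : ℕ) (ζ w : T2) : Prop :=
  mulVec2 (jacN k τ₀ n ζ.1) '' cone (R / ((k : ℝ) - 1)) ∩
    mulVec2 (jacN k τ₀ n w.1) '' cone (R / ((k : ℝ) - 1)) ⊆ {((0:ℝ), (0:ℝ))}

/-- The skew product with linear base `f₀(x,s) = (kx mod 1, s + τ₀(x)/(2π) mod 1)`. -/
def skewD (k : ℕ) (τ₀ : ℝ → ℝ) : T2 → T2 := skewMap (fun x => (k : ℝ) * x) τ₀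

/-- `#{w ∈ f₀^{-n}(z) : w not transversal to ζ}`. -/
def notTransCount (k : ℕ) (τ₀ : ℝ → ℝ) (R : ℝ) (n : ℕ) (z ζ : T2) : ℕ :=
  Nat.card {w : T2 // (skewD k τ₀)^[n] w = z ∧ ¬ Transversal k τ₀ R n ζ w}

/-- `kⁿ φ_R(n) = sup_z sup_{ζ∈f₀^{-n}(z)} #{w ∈ f₀^{-n}(z) : w ⋔̸ ζ}`. -/
def phiCount (k : ℕ) (τ₀ : ℝ → ℝ) (R : ℝ) (n : ℕ) : ℕ :=
  sSup {c : ℕ | ∃ z ζ : T2, (skewD k τ₀)^[n] ζ = z ∧ notTransCount k τ₀ R n z ζ = c}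

/-- `φ_R(n) = k^{-n} sup_z sup_{ζ∈f₀^{-n}(z)} #{w ∈ f₀^{-n}(z) : w ⋔̸ ζ}`. -/
def phiR (k : ℕ) (τ₀ : ℝ → ℝ) (R : ℝ) (n : ℕ) : ℝ :=
  (phiCount k τ₀ R n : ℝ) / (k : ℝ) ^ n

/-! ## The spaces `C^m(S¹)` -/

/-- The space `C^m(S¹)` of `C^m` (`m ≤ ∞`) 1-periodic real functions. -/
def CmSpace (m : ℕ∞) : Type := {τ : ℝ → ℝ // ContDiff ℝ m τ ∧ Function.Periodic τ 1}

/-- The `C^m` topology: uniform convergence of all derivatives of order `≤ m`. -/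
instance (m : ℕ∞) : TopologicalSpace (CmSpace m) :=
  TopologicalSpace.induced
    (fun τ => fun j : {j : ℕ // (j : ℕ∞) ≤ m} => UniformFun.ofFun (iteratedDeriv j.1 τ.1))
    inferInstance

/-- Partial captivity of `f₀(x,s) = (kx mod 1, s + τ₀(x)/(2π) mod 1)` (linear base), with the
canonical choice `Z = S¹ × [-R_κ,R_κ]`, `κ = (λ+1)/2`, `λ = (k+1)/2`,
`R_κ = sup|τ₀'|/(λ-κ) = 4 sup|τ₀'|/(k-1)`. -/
def PartCaptLin (k : ℕ) (τ₀ : ℝ → ℝ) : Prop :=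
  PartiallyCaptive k (fun x => (k : ℝ) * x) τ₀ ((⨆ x : ℝ, |deriv τ₀ x|) * 4 / ((k : ℝ) - 1))

/-!
A branch of the perturbed cocycle that ends in the strip `|η| ≤ R` stayed in it at every step,
since the fibre is expanded and points outside the strip never return. Along such a branch each
step is `C¹`-close to the unperturbed step with the same symbol, so after `n` steps the branch is
within `Kⁿ δ` of the unperturbed one; choosing `ε` (hence `δ`) small depending on `n` makes this
smaller than the minimal stretching `lam₀ⁿ` of the unperturbed fibre. Shifting the initial fibre
coordinate by `0` or `±s` therefore yields an unperturbed trapped branch, and one extra unperturbed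
step brings the three shifted starting points back into the strip. Hence
`N(ε; ω, n) ≤ 3 N(0; n + 1)`, and `(log 3 + log N(0; n + 1)) / n → 0` by partial captivity.
-/

open Function

section Lifts

variable {f : ℝ → ℝ}

lemma periodic_deriv_of_add_const {c d : ℝ} (h : ∀ x, f (x + c) = f x + d) :
    Periodic (deriv f) c := fun x => by
  rw [← deriv_comp_add_const, funext h, deriv_add_const]

lemma periodic_deriv {c : ℝ} (hp : Periodic f c) : Periodic (deriv f) c :=
  periodic_deriv_of_add_const fun x => by rw [hp x, add_zero]

lemma exists_abs_le_of_periodic {c : ℝ} (hp : Periodic f c) (hc : c ≠ 0) (hf : Continuous f) :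
    ∃ C, ∀ x, |f x| ≤ C := by
  obtain ⟨C, hC⟩ := (hp.isBounded_of_continuous hc hf).exists_norm_le
  exact ⟨C, fun x => hC _ (Set.mem_range_self x)⟩

lemma exists_lipschitzWith_of_periodic {c : ℝ} (hp : Periodic f c) (hc : c ≠ 0)
    (hf : ContDiff ℝ 1 f) : ∃ K, LipschitzWith K f := by
  obtain ⟨C, hC⟩ := exists_abs_le_of_periodic (periodic_deriv hp) hc (hf.continuous_deriv le_rfl)
  refine ⟨C.toNNReal, lipschitzWith_of_nnnorm_deriv_le (hf.differentiable one_ne_zero) fun x => ?_⟩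
  rw [← NNReal.coe_le_coe, coe_nnnorm, Real.coe_toNNReal']
  exact (hC x).trans (le_max_left _ _)

lemma mul_abs_sub_le_abs_sub_of_le_deriv {lam : ℝ} (hlam : 0 < lam) (hf : ∀ x, lam ≤ deriv f x)
    (x y : ℝ) : lam * |x - y| ≤ |f x - f y| := by
  have hd : Differentiable ℝ f := fun x =>
    differentiableAt_of_deriv_ne_zero (hlam.trans_le (hf x)).ne'
  wlog hxy : y ≤ x generalizing x y
  · rw [abs_sub_comm, abs_sub_comm (f x)]
    exact this y x (le_of_not_ge hxy)
  have h := mul_sub_le_image_sub_of_le_deriv hd hf hxy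
  rw [abs_of_nonneg (sub_nonneg.2 hxy), abs_of_nonneg (le_trans (by positivity) h)]
  exact h

lemma bijective_of_deriv_pos_of_add_nat {k : ℕ} (hk : k ≠ 0) (hf : ∀ x, 0 < deriv f x)
    (hl : ∀ x, f (x + 1) = f x + k) : Bijective f := by
  have hd : Differentiable ℝ f := fun x => differentiableAt_of_deriv_ne_zero (hf x).ne'
  have hk' : (0 : ℝ) < k := by exact_mod_cast Nat.pos_of_ne_zero hk
  have hc := hd.continuous
  obtain ⟨C, hC⟩ := exists_abs_le_of_periodic (f := fun x => f x - k * x)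
    (fun x => by simp only [hl]; ring) one_ne_zero (by fun_prop)
  refine ⟨(strictMono_of_deriv_pos hf).injective, hc.surjective ?_ ?_⟩
  · refine tendsto_atTop_mono (fun x => ?_)
      (tendsto_atTop_add_const_right _ (-C) (tendsto_id.const_mul_atTop hk'))
    rw [id]
    linarith [(abs_le.1 (hC x)).1]
  · refine tendsto_atBot_mono (fun x => ?_)
      (tendsto_atBot_add_const_right _ C (tendsto_id.const_mul_atBot hk'))
    rw [id]
    linarith [(abs_le.1 (hC x)).2]

end Lifts

section Branches

variable {θ : Ω → Ω} {E τ : Ω → ℝ → ℝ}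

lemma Fin.cons_comp_castSucc {β : Type*} {n : ℕ} (j : β) (α : Fin (n + 1) → β) :
    (fun i : Fin (n + 1) => (Fin.cons j α : Fin (n + 2) → β) i.castSucc) =
      Fin.cons j fun i => α i.castSucc := by
  funext i
  cases i using Fin.cases with
  | zero => rfl
  | succ i => rw [← Fin.succ_castSucc, Fin.cons_succ, Fin.cons_succ]

lemma canTraj_cons (j : ℕ) :
    ∀ (n : ℕ) (α : Fin n → ℕ) (ω : Ω) (p : ℝ × ℝ), canTraj θ E τ (n + 1) (Fin.cons j α) ω p =
      canTraj θ E τ n α ω (canMap (E (θ^[n] ω)) (τ (θ^[n] ω)) j p)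
  | 0, _, _, _ => rfl
  | n + 1, α, ω, p => by
    rw [canTraj.eq_2 θ E τ ω, canTraj.eq_2 θ E τ ω, ← Fin.succ_last, Fin.cons_succ,
      iterate_succ_apply, Fin.cons_comp_castSucc, canTraj_cons j n]

lemma canTraj_fst_eq :
    ∀ (n : ℕ) (α : Fin n → ℕ) (ω : Ω) (y η η' : ℝ),
      (canTraj θ E τ n α ω (y, η)).1 = (canTraj θ E τ n α ω (y, η')).1
  | 0, _, _, _, _, _ => rfl
  | n + 1, α, ω, y, η, η' => by
    simp only [canTraj, canMap, canTraj_fst_eq n _ (θ ω) y η η']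

lemma exists_canTraj_snd_sub {lam Λ : ℝ} (hlam : 0 ≤ lam) (hlow : ∀ ω x, lam ≤ deriv (E ω) x)
    (hup : ∀ ω x, deriv (E ω) x ≤ Λ) :
    ∀ (n : ℕ) (α : Fin n → ℕ) (ω : Ω) (y : ℝ), ∃ D, lam ^ n ≤ D ∧ D ≤ Λ ^ n ∧ ∀ η η',
      (canTraj θ E τ n α ω (y, η')).2 - (canTraj θ E τ n α ω (y, η)).2 = D * (η' - η)
  | 0, _, _, _ => ⟨1, by simp, by simp, fun _ _ => (one_mul _).symm⟩
  | n + 1, α, ω, y => by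
    obtain ⟨D, hD₁, hD₂, hD⟩ :=
      exists_canTraj_snd_sub hlam hlow hup n (fun i => α i.castSucc) (θ ω) y
    set x :=
      invFun (E ω) ((canTraj θ E τ n (fun i => α i.castSucc) (θ ω) (y, 0)).1 + α (Fin.last n))
    have hx : ∀ η, invFun (E ω)
        ((canTraj θ E τ n (fun i => α i.castSucc) (θ ω) (y, η)).1 + α (Fin.last n)) = x :=
      fun η => by rw [canTraj_fst_eq n _ _ y η 0]
    refine ⟨deriv (E ω) x * D, ?_, ?_, fun η η' => ?_⟩
    · rw [pow_succ']
      exact mul_le_mul (hlow ω x) hD₁ (by positivity) (hlam.trans (hlow ω x))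
    · rw [pow_succ']
      exact mul_le_mul (hup ω x) hD₂ ((pow_nonneg hlam n).trans hD₁)
        ((hlam.trans (hlow ω x)).trans (hup ω x))
    · have := hD η η'
      simp only [canTraj, canMap] at this ⊢
      rw [hx η, hx η']
      linear_combination deriv (E ω) x * this

end Branches

structure IsAdmissiblePerturbation (E₀ τ₀ : ℝ → ℝ) (lam Cτ δ : ℝ) (A B : ℝ → ℝ) : Prop where
  bijective : Bijective A
  le_deriv : ∀ x, lam ≤ deriv A x
  abs_deriv_le : ∀ x, |deriv B x| ≤ Cτ
  abs_sub_le : ∀ x, |A x - E₀ x| ≤ δ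
  abs_deriv_sub_le : ∀ x, |deriv A x - deriv E₀ x| ≤ δ
  abs_deriv_sub_le' : ∀ x, |deriv B x - deriv τ₀ x| ≤ δ

section Perturbation

variable {E₀ τ₀ A B : ℝ → ℝ} {lam Cτ δ R : ℝ}

lemma abs_snd_le_of_abs_canMap_snd_le (hP : IsAdmissiblePerturbation E₀ τ₀ lam Cτ δ A B)
    (hlam : 1 ≤ lam) (hesc : Cτ ≤ (lam - 1) * R) {j : ℕ} {q : ℝ × ℝ}
    (hq : |(canMap A B j q).2| ≤ R) : |q.2| ≤ R := by
  by_contra! hR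
  set x := invFun A (q.1 + j)
  have hA : lam * |q.2| ≤ |deriv A x * q.2| := by
    rw [abs_mul]
    exact mul_le_mul_of_nonneg_right ((hP.le_deriv x).trans (le_abs_self _)) (abs_nonneg _)
  have hB : |deriv A x * q.2| - |deriv B x| ≤ |(canMap A B j q).2| := by
    show _ ≤ |deriv A x * q.2 + deriv B x|
    simpa only [sub_neg_eq_add, abs_neg] using
      abs_sub_abs_le_abs_sub (deriv A x * q.2) (-deriv B x)
  nlinarith [hP.abs_deriv_le x]

lemma dist_canMap_le (hP : IsAdmissiblePerturbation E₀ τ₀ lam Cτ δ A B) (hE₀ : Bijective E₀)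
    {Λ : ℝ} {M : NNReal} (hlow : ∀ x, 1 ≤ deriv E₀ x) (hup : ∀ x, deriv E₀ x ≤ Λ)
    (hLipE : LipschitzWith M (deriv E₀)) (hLipτ : LipschitzWith M (deriv τ₀)) (j : ℕ)
    {q q₀ : ℝ × ℝ} {e : ℝ} (hq : |q.2| ≤ R) (hqq₀ : dist q q₀ ≤ e) (hδe : δ ≤ e) :
    dist (canMap A B j q) (canMap E₀ τ₀ j q₀) ≤ (2 + Λ + (1 + 2 * M) * (R + 1)) * e := by
  rw [Prod.dist_eq, Real.dist_eq, Real.dist_eq] at hqq₀ ⊢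
  obtain ⟨he₁, he₂⟩ := max_le_iff.1 hqq₀
  set x := invFun A (q.1 + j)
  set x₀ := invFun E₀ (q₀.1 + j)
  have hx : A x = q.1 + j := invFun_eq (hP.bijective.2 _)
  have hx₀ : E₀ x₀ = q₀.1 + j := invFun_eq (hE₀.2 _)
  have hdx : |x - x₀| ≤ 2 * e := calc
    |x - x₀| ≤ |E₀ x - E₀ x₀| := by
      simpa using mul_abs_sub_le_abs_sub_of_le_deriv one_pos hlow x x₀
    _ = |(E₀ x - A x) + (q.1 - q₀.1)| := by rw [hx, hx₀]; ring_nf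
    _ ≤ δ + e := (abs_add_le _ _).trans
      (add_le_add (by rw [abs_sub_comm]; exact hP.abs_sub_le x) he₁)
    _ ≤ 2 * e := by linarith
  have hLip : ∀ {g : ℝ → ℝ}, LipschitzWith M g → |g x - g x₀| ≤ M * (2 * e) := fun hg => by
    simpa only [Real.dist_eq] using (hg.dist_le_mul x x₀).trans
      (mul_le_mul_of_nonneg_left hdx M.coe_nonneg)
  have hdA : |deriv A x - deriv E₀ x₀| ≤ (1 + 2 * M) * e := by
    have := abs_sub_le (deriv A x) (deriv E₀ x) (deriv E₀ x₀)
    linarith [hP.abs_deriv_sub_le x, hLip hLipE]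
  have hdB : |deriv B x - deriv τ₀ x₀| ≤ (1 + 2 * M) * e := by
    have := abs_sub_le (deriv B x) (deriv τ₀ x) (deriv τ₀ x₀)
    linarith [hP.abs_deriv_sub_le' x, hLip hLipτ]
  have he : 0 ≤ e := (abs_nonneg _).trans he₁
  have hM : (0 : ℝ) ≤ M := M.coe_nonneg
  have hK : 2 ≤ 2 + Λ + (1 + 2 * M) * (R + 1) := by
    nlinarith [hlow x₀, hup x₀, (abs_nonneg _).trans hq]
  refine max_le (show |x - x₀| ≤ _ by nlinarith) ?_
  have hsplit : (canMap A B j q).2 - (canMap E₀ τ₀ j q₀).2 = (deriv A x - deriv E₀ x₀) * q.2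
      + deriv E₀ x₀ * (q.2 - q₀.2) + (deriv B x - deriv τ₀ x₀) := by
    simp only [canMap]; ring
  rw [hsplit]
  calc _ ≤ |(deriv A x - deriv E₀ x₀) * q.2| + |deriv E₀ x₀ * (q.2 - q₀.2)|
        + |deriv B x - deriv τ₀ x₀| := abs_add_three _ _ _
    _ ≤ (1 + 2 * M) * e * R + Λ * e + (1 + 2 * M) * e := by
      rw [abs_mul, abs_mul, abs_of_pos (show 0 < deriv E₀ x₀ by linarith [hlow x₀])]
      have h₁ := mul_le_mul hdA hq (abs_nonneg _) ((abs_nonneg _).trans hdA)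
      have h₂ := mul_le_mul (hup x₀) he₂ (abs_nonneg _) (by linarith [hlow x₀, hup x₀])
      linarith
    _ ≤ _ := by nlinarith

end Perturbation

section Counting

variable {k : ℕ} {θ : Ω → Ω} {A B : Ω → ℝ → ℝ} {E₀ τ₀ : ℝ → ℝ} {lam Cτ δ Λ R : ℝ} {M : NNReal}

lemma dist_canTraj_le (hE₀ : Bijective E₀) (hlow : ∀ x, 1 ≤ deriv E₀ x)
    (hup : ∀ x, deriv E₀ x ≤ Λ) (hLipE : LipschitzWith M (deriv E₀))
    (hLipτ : LipschitzWith M (deriv τ₀)) (hlam : 1 ≤ lam) (hesc : Cτ ≤ (lam - 1) * R)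
    (hδ : 0 ≤ δ) :
    ∀ (n : ℕ) (α : Fin n → ℕ) (ω : Ω),
      (∀ i, IsAdmissiblePerturbation E₀ τ₀ lam Cτ δ (A (θ^[i] ω)) (B (θ^[i] ω))) →
      ∀ p, |(canTraj θ A B n α ω p).2| ≤ R →
      dist (canTraj θ A B n α ω p) (canTraj id (fun _ => E₀) (fun _ => τ₀) n α () p) ≤
        (2 + Λ + (1 + 2 * M) * (R + 1)) ^ n * δ
  | 0, _, _, _, _, _ => by simpa [canTraj] using hδ
  | n + 1, α, ω, hP, p, hend => by
    have hq := abs_snd_le_of_abs_canMap_snd_le (hP 0) hlam hesc hend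
    have ih := dist_canTraj_le hE₀ hlow hup hLipE hLipτ hlam hesc hδ n (fun i => α i.castSucc)
      (θ ω) (fun i => by simpa only [iterate_succ_apply] using hP (i + 1)) p hq
    have hK : 1 ≤ 2 + Λ + (1 + 2 * M) * (R + 1) := by
      nlinarith [hlow 0, hup 0, (abs_nonneg _).trans hq, M.coe_nonneg]
    rw [pow_succ', mul_assoc]
    exact dist_canMap_le (hP 0) hE₀ hlow hup hLipE hLipτ _ hq ih
      (le_mul_of_one_le_left hδ (one_le_pow₀ hK))

lemma natCard_subtype_le_add {α : Type*} [Finite α] {P Q Q' : α → Prop}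
    (h : ∀ a, P a → Q a ∨ Q' a) :
    Nat.card {a // P a} ≤ Nat.card {a // Q a} + Nat.card {a // Q' a} :=
  calc Nat.card {a // P a} ≤ ({a | Q a} ∪ {a | Q' a}).ncard :=
        Set.ncard_le_ncard h (Set.toFinite _)
    _ ≤ _ := Set.ncard_union_le _ _

lemma trajCount_le_pow (n : ℕ) (ω : Ω) (p : ℝ × ℝ) : trajCount k θ A B R n ω p ≤ k ^ n :=
  (Finite.card_subtype_le _).trans (by simp)

lemma trajCount_le_NcountD {n : ℕ} {p : ℝ × ℝ} (hp : |p.2| ≤ R) :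
    trajCount k id (fun _ => E₀) (fun _ => τ₀) R n () p ≤ NcountD k E₀ τ₀ R n := by
  unfold NcountD Ncount
  exact le_csSup ⟨k ^ n, by rintro _ ⟨q, -, rfl⟩; exact trajCount_le_pow n () q⟩ ⟨p, hp, rfl⟩

/-- Prepend one unperturbed step issued from the point of the strip that it maps to `(y, t)`. -/
lemma trajCount_le_NcountD_succ [NeZero k] (hE₀ : Bijective E₀) {lam₀ : ℝ} (hlam₀ : 0 < lam₀)
    (hlow : ∀ x, lam₀ ≤ deriv E₀ x) (hτ₀ : ∀ x, |deriv τ₀ x| ≤ Cτ) (n : ℕ) (y : ℝ) {t : ℝ}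
    (ht : |t| + Cτ ≤ lam₀ * R) :
    trajCount k id (fun _ => E₀) (fun _ => τ₀) R n () (y, t) ≤ NcountD k E₀ τ₀ R (n + 1) := by
  set p : ℝ × ℝ := (E₀ y, (t - deriv τ₀ y) / deriv E₀ y)
  have hy : 0 < deriv E₀ y := hlam₀.trans_le (hlow y)
  have hp : |p.2| ≤ R := by
    rw [abs_div, abs_of_pos hy, div_le_iff₀ hy]
    have hR : 0 ≤ R := nonneg_of_mul_nonneg_right
      ((add_nonneg (abs_nonneg t) ((abs_nonneg _).trans (hτ₀ y))).trans ht) hlam₀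
    nlinarith [abs_sub t (deriv τ₀ y), hτ₀ y, hlow y]
  have hcan : canMap E₀ τ₀ 0 p = (y, t) := by
    have hx : invFun E₀ (E₀ y + ((0 : ℕ) : ℝ)) = y := by
      simpa using leftInverse_invFun hE₀.1 y
    simp only [canMap, p, hx]
    ext <;> field_simp; ring
  have hmem : ∀ α : Fin n → Fin k,
      |(canTraj id (fun _ => E₀) (fun _ => τ₀) n (fun i => (α i : ℕ)) () (y, t)).2| ≤ R →
      |(canTraj id (fun _ => E₀) (fun _ => τ₀) (n + 1)
        (fun i => ((Fin.cons 0 α : Fin (n + 1) → Fin k) i : ℕ)) () p).2| ≤ R := fun α hα => by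
    have hcons : (fun i => ((Fin.cons 0 α : Fin (n + 1) → Fin k) i : ℕ)) =
        Fin.cons 0 fun i => (α i : ℕ) := by
      have h := Fin.comp_cons Fin.val (0 : Fin k) α
      rw [Fin.val_zero] at h
      exact h
    rwa [hcons, canTraj_cons, hcan]
  refine le_trans ?_ (trajCount_le_NcountD hp)
  exact Nat.card_le_card_of_injective (fun α => ⟨Fin.cons 0 α.1, hmem α.1 α.2⟩) fun α β h =>
    Subtype.ext (Fin.cons_right_injective (α := fun _ => Fin k) 0 (congrArg Subtype.val h))

/-- The perturbed branch is shadowed by the unperturbed one within `Kⁿ δ ≤ lam₀ⁿ s`, while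
shifting the initial fibre coordinate by `±s` moves the unperturbed endpoint by between `lam₀ⁿ s`
and `Λⁿ s ≤ 2R`. -/
lemma exists_shift_abs_canTraj_snd_le (hE₀ : Bijective E₀) {lam₀ : ℝ} (hlam₀ : 1 ≤ lam₀)
    (hlow : ∀ x, lam₀ ≤ deriv E₀ x) (hup : ∀ x, deriv E₀ x ≤ Λ)
    (hLipE : LipschitzWith M (deriv E₀)) (hLipτ : LipschitzWith M (deriv τ₀)) (hlam : 1 ≤ lam)
    (hesc : Cτ ≤ (lam - 1) * R) (hδ : 0 ≤ δ) {n : ℕ} {s : ℝ} (hs : 0 ≤ s)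
    (hsmall : (2 + Λ + (1 + 2 * M) * (R + 1)) ^ n * δ ≤ lam₀ ^ n * s)
    (hsR : Λ ^ n * s ≤ 2 * R) {ω : Ω}
    (hP : ∀ i, IsAdmissiblePerturbation E₀ τ₀ lam Cτ δ (A (θ^[i] ω)) (B (θ^[i] ω)))
    {α : Fin n → ℕ} {p : ℝ × ℝ} (hα : |(canTraj θ A B n α ω p).2| ≤ R) :
    ∃ t, (t = p.2 ∨ t = p.2 - s ∨ t = p.2 + s) ∧
      |(canTraj id (fun _ => E₀) (fun _ => τ₀) n α () (p.1, t)).2| ≤ R := by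
  have hd := dist_canTraj_le hE₀ (fun x => hlam₀.trans (hlow x)) hup hLipE hLipτ hlam hesc hδ
    n α ω hP p hα
  rw [Prod.dist_eq, max_le_iff, Real.dist_eq, Real.dist_eq] at hd
  obtain ⟨D, hD₁, hD₂, hD⟩ := exists_canTraj_snd_sub (θ := id) (E := fun _ => E₀)
    (τ := fun _ => τ₀) (by linarith) (fun _ => hlow) (fun _ => hup) n α () p.1
  have hDs₁ : lam₀ ^ n * s ≤ D * s := mul_le_mul_of_nonneg_right hD₁ hs
  have hDs₂ : D * s ≤ Λ ^ n * s := mul_le_mul_of_nonneg_right hD₂ hs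
  have hup' := hD p.2 (p.2 + s)
  have hdown := hD p.2 (p.2 - s)
  set v := (canTraj id (fun _ => E₀) (fun _ => τ₀) n α () (p.1, p.2)).2
  have hv := abs_le.1 (abs_sub_comm v _ ▸ hd.2)
  by_cases hvR : |v| ≤ R
  · exact ⟨p.2, Or.inl rfl, hvR⟩
  rcases le_or_gt v 0 with hv₀ | hv₀
  · refine ⟨p.2 + s, Or.inr (Or.inr rfl), abs_le.2 ⟨?_, ?_⟩⟩ <;>
      nlinarith [abs_of_nonpos hv₀, abs_le.1 hα]
  · refine ⟨p.2 - s, Or.inr (Or.inl rfl), abs_le.2 ⟨?_, ?_⟩⟩ <;>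
      nlinarith [abs_of_pos hv₀, abs_le.1 hα]

end Counting

lemma Ncount_le_three_mul_NcountD {k : ℕ} [NeZero k] {θ : Ω → Ω} {A B : Ω → ℝ → ℝ}
    {E₀ τ₀ : ℝ → ℝ} {lam₀ lam Cτ δ Λ R σ : ℝ} {M : NNReal} (hE₀ : Bijective E₀)
    (hlam₀ : 1 ≤ lam₀) (hlow : ∀ x, lam₀ ≤ deriv E₀ x) (hup : ∀ x, deriv E₀ x ≤ Λ)
    (hLipE : LipschitzWith M (deriv E₀)) (hLipτ : LipschitzWith M (deriv τ₀))
    (hτ₀ : ∀ x, |deriv τ₀ x| ≤ Cτ) (hlam : 1 ≤ lam) (hesc : Cτ ≤ (lam - 1) * R) (hδ : 0 ≤ δ)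
    (hσ : 0 ≤ σ) (hσR : σ ≤ 2 * R) (hσlam : R + σ + Cτ ≤ lam₀ * R) {n : ℕ}
    (hsmall : (2 + Λ + (1 + 2 * M) * (R + 1)) ^ n * δ ≤ σ * (lam₀ / Λ) ^ n) {ω : Ω}
    (hP : ∀ i, IsAdmissiblePerturbation E₀ τ₀ lam Cτ δ (A (θ^[i] ω)) (B (θ^[i] ω))) :
    Ncount k θ A B R n ω ≤ 3 * NcountD k E₀ τ₀ R (n + 1) := by
  refine csSup_le' ?_
  rintro _ ⟨p, hp, rfl⟩
  have hΛ : 0 < Λ ^ n := pow_pos (by linarith [hlow 0, hup 0]) n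
  set s := σ / Λ ^ n
  have hs : 0 ≤ s := by positivity
  have hsσ : s ≤ σ := div_le_self hσ (one_le_pow₀ (by linarith [hlow 0, hup 0]))
  set Q : ℝ → (Fin n → Fin k) → Prop := fun t α =>
    |(canTraj id (fun _ => E₀) (fun _ => τ₀) n (fun i => (α i : ℕ)) () (p.1, t)).2| ≤ R
  have hcover : ∀ α : Fin n → Fin k, |(canTraj θ A B n (fun i => (α i : ℕ)) ω p).2| ≤ R →
      Q p.2 α ∨ Q (p.2 - s) α ∨ Q (p.2 + s) α := fun α hα => by
    obtain ⟨t, rfl | rfl | rfl, ht⟩ := exists_shift_abs_canTraj_snd_le hE₀ hlam₀ hlow hup hLipE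
      hLipτ hlam hesc hδ hs (hsmall.trans_eq (by rw [div_pow]; ring))
      ((mul_div_cancel₀ σ hΛ.ne').trans_le hσR) hP hα
    exacts [Or.inl ht, Or.inr (Or.inl ht), Or.inr (Or.inr ht)]
  have hQ : ∀ t, |t| ≤ R + σ → Nat.card {α // Q t α} ≤ NcountD k E₀ τ₀ R (n + 1) :=
    fun t ht => trajCount_le_NcountD_succ hE₀ (by linarith) hlow hτ₀ n p.1 (by linarith)
  have h₁ := natCard_subtype_le_add hcover
  have h₂ := natCard_subtype_le_add (P := fun α => Q (p.2 - s) α ∨ Q (p.2 + s) α) fun _ => id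
  have h₃ := hQ p.2 (by linarith)
  have h₄ := hQ (p.2 - s) (by linarith [abs_sub p.2 s, abs_of_nonneg hs])
  have h₅ := hQ (p.2 + s) (by linarith [abs_add_le p.2 s, abs_of_nonneg hs])
  refine le_trans h₁ ?_
  omega

lemma exists_deriv_le_and_lipschitzWith {k : ℕ} {E₀ τ₀ : ℝ → ℝ}
    (hE₀ : ContDiff ℝ (⊤ : ℕ∞) E₀) (hE₀lift : ∀ x, E₀ (x + 1) = E₀ x + k)
    (hτ₀ : ContDiff ℝ (⊤ : ℕ∞) τ₀) (hτ₀per : Periodic τ₀ 1) :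
    ∃ (Λ : ℝ) (M : NNReal), (∀ x, deriv E₀ x ≤ Λ) ∧ LipschitzWith M (deriv E₀) ∧
      LipschitzWith M (deriv τ₀) := by
  have hE₀' := periodic_deriv_of_add_const hE₀lift
  obtain ⟨Λ, hΛ⟩ := exists_abs_le_of_periodic hE₀' one_ne_zero (hE₀.continuous_deriv (by simp))
  obtain ⟨ME, hME⟩ := exists_lipschitzWith_of_periodic hE₀' one_ne_zero
    ((contDiff_infty_iff_deriv.1 hE₀).2.of_le (by simp))
  obtain ⟨Mτ, hMτ⟩ := exists_lipschitzWith_of_periodic (periodic_deriv hτ₀per) one_ne_zero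
    ((contDiff_infty_iff_deriv.1 hτ₀).2.of_le (by simp))
  exact ⟨Λ, max ME Mτ, fun x => (le_abs_self _).trans (hΛ x),
    hME.weaken (le_max_left _ _), hMτ.weaken (le_max_right _ _)⟩

lemma ae_forall_iterate [MeasurableSpace Ω] {P : Measure Ω} {θ : Ω → Ω}
    (hθ : MeasurePreserving θ P P) {Q : Ω → Prop} (h : ∀ᵐ ω ∂P, Q ω) :
    ∀ᵐ ω ∂P, ∀ i : ℕ, Q (θ^[i] ω) :=
  ae_all_iff.2 fun i => (hθ.iterate i).quasiMeasurePreserving.ae h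

lemma tendsto_const_add_div_of_tendsto {u : ℕ → ℝ} (hu : Tendsto (fun n => u n / n) atTop (𝓝 0))
    (c : ℝ) : Tendsto (fun n : ℕ => (c + u (n + 1)) / n) atTop (𝓝 0) := by
  have hshift : Tendsto (fun n : ℕ => u (n + 1) / (n + 1)) atTop (𝓝 0) := by
    simpa using (tendsto_add_atTop_iff_nat 1).2 hu
  have hratio : Tendsto (fun n : ℕ => ((n : ℝ) / (n + 1))⁻¹) atTop (𝓝 1) := by
    simpa using (tendsto_natCast_div_add_atTop (1 : ℝ)).inv₀ one_ne_zero
  have := (tendsto_const_div_atTop_nhds_zero_nat c).add (hshift.mul hratio)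
  rw [zero_mul, add_zero] at this
  refine this.congr' ((eventually_ne_atTop 0).mono fun n hn => ?_)
  field_simp

lemma abs_log_div_le_of_le_three_mul {N N₀ : ℕ} (h : N ≤ 3 * N₀) (n : ℕ) :
    |Real.log N / n| ≤ (Real.log 3 + Real.log N₀) / n := by
  rw [abs_of_nonneg (div_nonneg (Real.log_natCast_nonneg N) n.cast_nonneg)]
  refine div_le_div_of_nonneg_right ?_ n.cast_nonneg
  rcases N.eq_zero_or_pos with rfl | hN
  · simpa using add_nonneg (Real.log_nonneg (by norm_num : (1 : ℝ) ≤ 3))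
      (Real.log_natCast_nonneg N₀)
  · rw [← Real.log_mul (by norm_num) (by exact_mod_cast (by omega : N₀ ≠ 0))]
    exact Real.log_le_log (by exact_mod_cast hN) (by exact_mod_cast h)

lemma exists_ae_isAdmissiblePerturbation [MeasurableSpace Ω] {P : Measure Ω}
    {k : ℕ} (hk : k ≠ 0) {E τ : ℝ → Ω → ℝ → ℝ} {E₀ τ₀ : ℝ → ℝ} {lam Cτ ε₀ δ : ℝ}
    (hlam : 0 < lam) (hElift : ∀ ε ω x, E ε ω (x + 1) = E ε ω x + k)
    (hexp : ∀ ε, 0 ≤ ε → ε < ε₀ → ∀ᵐ ω ∂P, ∀ x, lam ≤ deriv (E ε ω) x)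
    (hCτ : ∀ ε, 0 ≤ ε → ε < ε₀ → ∀ᵐ ω ∂P, ∀ x, |deriv (τ ε ω) x| ≤ Cτ)
    (hconv : ∀ j : ℕ, ∀ δ : ℝ, 0 < δ → ∃ ε' > 0, ∀ ε, 0 ≤ ε → ε < ε' → ∀ᵐ ω ∂P, ∀ x,
      |iteratedDeriv j (E ε ω) x - iteratedDeriv j E₀ x| < δ ∧
      |iteratedDeriv j (τ ε ω) x - iteratedDeriv j τ₀ x| < δ)
    (hε₀ : 0 < ε₀) (hδ : 0 < δ) :
    ∃ ε' > 0, ε' ≤ ε₀ ∧ ∀ ε, 0 ≤ ε → ε < ε' →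
      ∀ᵐ ω ∂P, IsAdmissiblePerturbation E₀ τ₀ lam Cτ δ (E ε ω) (τ ε ω) := by
  obtain ⟨ε₁, hε₁, hC₀⟩ := hconv 0 δ hδ
  obtain ⟨ε₂, hε₂, hC₁⟩ := hconv 1 δ hδ
  refine ⟨min ε₀ (min ε₁ ε₂), by positivity, min_le_left _ _, fun ε hε hε' => ?_⟩
  simp only [lt_min_iff] at hε'
  filter_upwards [hexp ε hε hε'.1, hCτ ε hε hε'.1, hC₀ ε hε hε'.2.1, hC₁ ε hε hε'.2.2]
    with ω hωexp hωτ hω₀ hω₁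
  simp only [iteratedDeriv_zero, iteratedDeriv_one] at hω₀ hω₁
  exact ⟨bijective_of_deriv_pos_of_add_nat hk (fun x => hlam.trans_le (hωexp x)) (hElift ε ω),
    hωexp, hωτ, fun x => (hω₀ x).1.le, fun x => (hω₁ x).1.le, fun x => (hω₁ x).2.le⟩

theorem stmt7_general
    {Ω : Type*} [MeasurableSpace Ω]
    (k : ℕ) (hk : 2 ≤ k)
    (P : Measure Ω) [IsProbabilityMeasure P]
    (θ : Ω → Ω) (hθ : Ergodic θ P)
    (E τ : ℝ → Ω → ℝ → ℝ) (E₀ τ₀ : ℝ → ℝ)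
    (hτ0 : ∀ ω, τ 0 ω = τ₀)
    (hE₀smooth : ContDiff ℝ (⊤ : ℕ∞) E₀) (hE₀lift : ∀ x, E₀ (x + 1) = E₀ x + k)
    (lam0 : ℝ) (hlam0 : 1 < lam0) (hE₀exp : ∀ x, lam0 ≤ deriv E₀ x)
    (hτ₀smooth : ContDiff ℝ (⊤ : ℕ∞) τ₀) (hτ₀per : Function.Periodic τ₀ 1)
    (hElift : ∀ ε ω x, E ε ω (x + 1) = E ε ω x + k)
    (ε₀ : ℝ) (hε₀ : 0 < ε₀)
    (hexp : ∀ ε, 0 ≤ ε → ε < ε₀ → ∀ᵐ ω ∂P, ∀ x, (lam0 + 1) / 2 ≤ deriv (E ε ω) x)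
    (hconv : ∀ j : ℕ, ∀ δ : ℝ, 0 < δ → ∃ ε' > 0, ∀ ε, 0 ≤ ε → ε < ε' → ∀ᵐ ω ∂P, ∀ x,
      |iteratedDeriv j (E ε ω) x - iteratedDeriv j E₀ x| < δ ∧
      |iteratedDeriv j (τ ε ω) x - iteratedDeriv j τ₀ x| < δ)
    (Cτ : ℝ) (hCτpos : 0 < Cτ)
    (hCτ : ∀ ε, 0 ≤ ε → ε < ε₀ → ∀ᵐ ω ∂P, ∀ x, |deriv (τ ε ω) x| ≤ Cτ)
    (κ : ℝ) (hκ : κ = ((lam0 + 1) / 2 + 1) / 2)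
    (Rκ : ℝ) (hRκ : Cτ / ((lam0 + 1) / 2 - κ) ≤ Rκ)
    (hPC : PartiallyCaptive k E₀ τ₀ Rκ) :
    ∀ δ : ℝ, 0 < δ → ∃ nδ : ℕ, ∀ n : ℕ, nδ ≤ n →
      ∃ εn : ℝ, 0 < εn ∧ εn ≤ ε₀ ∧ ∀ ε, 0 ≤ ε → ε < εn →
        ∃ b : ℝ, b < δ ∧ ∀ᵐ ω ∂P,
          |Real.log (Ncount k θ (E ε) (τ ε) Rκ n ω) / n| ≤ b := by
  intro δ hδ
  have : NeZero k := ⟨by omega⟩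
  obtain ⟨Λ, M, hΛ, hLipE, hLipτ⟩ :=
    exists_deriv_le_and_lipschitzWith hE₀smooth hE₀lift hτ₀smooth hτ₀per
  have hE₀ := bijective_of_deriv_pos_of_add_nat (NeZero.ne k)
    (fun x => by linarith [hE₀exp x]) hE₀lift
  have hτ₀ : ∀ x, |deriv τ₀ x| ≤ Cτ := by
    obtain ⟨ω, hω⟩ := (hCτ 0 le_rfl hε₀).exists
    simpa only [hτ0] using hω
  have hCR : 4 * Cτ ≤ (lam0 - 1) * Rκ := by
    rw [hκ, div_le_iff₀ (by linarith)] at hRκ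
    linarith
  have hR : 0 < Rκ := by nlinarith
  -- room for the shifts of the fibre coordinate left by `Rκ ≥ 4 Cτ / (lam0 - 1)`
  set σ := min (2 * Rκ) ((lam0 - 1) * Rκ - Cτ)
  have hσ : 0 < σ := lt_min (by linarith) (by nlinarith)
  obtain ⟨nδ, hnδ⟩ := eventually_atTop.1 ((tendsto_const_add_div_of_tendsto hPC
    (Real.log 3)).eventually (gt_mem_nhds hδ))
  refine ⟨nδ, fun n hn => ?_⟩
  set K := 2 + Λ + (1 + 2 * M) * (Rκ + 1)
  have hK : 0 < K := by nlinarith [hE₀exp 0, hΛ 0, M.coe_nonneg]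
  have hΛ₀ : 0 < Λ := by linarith [hE₀exp 0, hΛ 0]
  -- the size of perturbation at which the shadowing error `Kⁿ δ` reaches `σ (lam0 / Λ)ⁿ`
  obtain ⟨εn, hεn, hεn₀, hgood⟩ := exists_ae_isAdmissiblePerturbation (NeZero.ne k)
    (by linarith) hElift hexp hCτ hconv hε₀ (by positivity : 0 < σ * (lam0 / Λ) ^ n / K ^ n)
  refine ⟨εn, hεn, hεn₀, fun ε hε hεεn => ⟨_, hnδ n hn, ?_⟩⟩
  filter_upwards [ae_forall_iterate hθ.toMeasurePreserving (hgood ε hε hεεn)] with ω hω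
  refine abs_log_div_le_of_le_three_mul (Ncount_le_three_mul_NcountD hE₀ hlam0.le hE₀exp hΛ
    hLipE hLipτ hτ₀ (by linarith) (by nlinarith) (by positivity) hσ.le (min_le_left _ _)
    (by linarith [min_le_right (2 * Rκ) ((lam0 - 1) * Rκ - Cτ)])
    (mul_div_cancel₀ _ (pow_pos hK n).ne').le hω) n

theorem stmt7
    {Ω : Type*} [MeasurableSpace Ω]
    (k : ℕ) (hk : 2 ≤ k)
    (P : Measure Ω) [IsProbabilityMeasure P]
    (θ : Ω → Ω) (hθ : Ergodic θ P) (hθbij : Function.Bijective θ)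
    (E τ : ℝ → Ω → ℝ → ℝ) (E₀ τ₀ : ℝ → ℝ)
    (hE0 : ∀ ω, E 0 ω = E₀) (hτ0 : ∀ ω, τ 0 ω = τ₀)
    (hE₀smooth : ContDiff ℝ (⊤ : ℕ∞) E₀) (hE₀lift : ∀ x, E₀ (x + 1) = E₀ x + k)
    (lam0 : ℝ) (hlam0 : 1 < lam0) (hE₀exp : ∀ x, lam0 ≤ deriv E₀ x)
    (hτ₀smooth : ContDiff ℝ (⊤ : ℕ∞) τ₀) (hτ₀per : Function.Periodic τ₀ 1)
    (hEsmooth : ∀ ε ω, 0 ≤ ε → ContDiff ℝ (⊤ : ℕ∞) (E ε ω))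
    (hElift : ∀ ε ω x, E ε ω (x + 1) = E ε ω x + k)
    (hτsmooth : ∀ ε ω, 0 ≤ ε → ContDiff ℝ (⊤ : ℕ∞) (τ ε ω))
    (hτper : ∀ ε ω, Function.Periodic (τ ε ω) 1)
    (hmeasE : ∀ ε x, Measurable fun ω => E ε ω x)
    (hmeasτ : ∀ ε x, Measurable fun ω => τ ε ω x)
    (ε₀ : ℝ) (hε₀ : 0 < ε₀)
    (hexp : ∀ ε, 0 ≤ ε → ε < ε₀ → ∀ᵐ ω ∂P, ∀ x, (lam0 + 1) / 2 ≤ deriv (E ε ω) x)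
    (hconv : ∀ j : ℕ, ∀ δ : ℝ, 0 < δ → ∃ ε' > 0, ∀ ε, 0 ≤ ε → ε < ε' → ∀ᵐ ω ∂P, ∀ x,
      |iteratedDeriv j (E ε ω) x - iteratedDeriv j E₀ x| < δ ∧
      |iteratedDeriv j (τ ε ω) x - iteratedDeriv j τ₀ x| < δ)
    (Cτ : ℝ) (hCτpos : 0 < Cτ)
    (hCτ : ∀ ε, 0 ≤ ε → ε < ε₀ → ∀ᵐ ω ∂P, ∀ x, |deriv (τ ε ω) x| ≤ Cτ)
    (κ : ℝ) (hκ : κ = ((lam0 + 1) / 2 + 1) / 2)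
    (Rκ : ℝ) (hRκ : Cτ / ((lam0 + 1) / 2 - κ) ≤ Rκ)
    (hPC : PartiallyCaptive k E₀ τ₀ Rκ) :
    ∀ δ : ℝ, 0 < δ → ∃ nδ : ℕ, ∀ n : ℕ, nδ ≤ n →
      ∃ εn : ℝ, 0 < εn ∧ εn ≤ ε₀ ∧ ∀ ε, 0 ≤ ε → ε < εn →
        ∃ b : ℝ, b < δ ∧ ∀ᵐ ω ∂P,
          |Real.log (Ncount k θ (E ε) (τ ε) Rκ n ω) / n| ≤ b :=
  stmt7_general k hk P θ hθ E τ E₀ τ₀ hτ0 hE₀smooth hE₀lift lam0 hlam0 hE₀exp hτ₀smooth hτ₀per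
    hElift ε₀ hε₀ hexp hconv Cτ hCτpos hCτ κ hκ Rκ hRκ hPC

end RPE
end
end

section
/- Suppose E₀ is linear (E₀(x) = kx mod 1). If R ≥ π^{−1}(sup_x |τ₀'(x)| + (k−1)R_κ/2), then N_{R_κ}(0;n) ≤ kⁿ φ_R(n) for every n ≥ 1, where φ_R(n) = k^{−n} sup_z sup_{ζ ∈ f₀^{−n}(z)} #{w ∈ f₀^{−n}(z) : w is not transversal to ζ}. -/
open MeasureTheory Filter Topology
open scoped ENNReal

noncomputable section

namespace RPE

variable {Ω : Type*}

/-!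
A branch `α` of the unperturbed canonical dynamics issued from `(y, η)` ends at
`(x_α, kⁿη + 2π b(x_α))`, where the `x_α` are distinct solutions of `kⁿx = y` on the circle and
`b(x)` is the shear entry of `Df₀ⁿ(x) = [[kⁿ, 0], [b(x), 1]]`. If the branches `α` and `β` both
stay in `|η| ≤ R_κ`, then `|b(x_α) - b(x_β)| ≤ R_κ/π ≤ 2ϑ_R`, so `(kⁿ, (b(x_α) + b(x_β))/2)` lies
in both cone images and the preimages of `(y, 0)` over `x_α` and `x_β` are not transversal.
Fixing one trapped `β`, the trapped branches thus inject into the preimages of `(y, 0)` that are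
not transversal to the one over `x_β`.
-/

lemma coe_lift01 (x : S1) : ((lift01 x : ℝ) : S1) = x :=
  (AddCircle.equivIco (1 : ℝ) 0).symm_apply_apply x

lemma coe_add_natCast (x : ℝ) (j : ℕ) : ((x + j : ℝ) : S1) = x := by
  rw [AddCircle.coe_add, ← nsmul_one, AddCircle.coe_nsmul, AddCircle.coe_period, smul_zero,
    add_zero]

lemma _root_.Function.Periodic.apply_lift01 {f : ℝ → ℝ} (hf : Function.Periodic f 1) (x : ℝ) :
    f (lift01 (x : S1)) = f x := by
  rw [← hf.lift_coe, coe_lift01, hf.lift_coe]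

lemma _root_.Function.Periodic.deriv {f : ℝ → ℝ} (hf : Function.Periodic f 1) :
    Function.Periodic (deriv f) 1 := fun x => by
  rw [← deriv_comp_add_const, funext hf]

lemma _root_.AddCircle.encard_nsmul_eq_le {𝕜 : Type*} [AddCommGroup 𝕜] {p : 𝕜} (m : ℕ)
    (hm : m ≠ 0) (hreg : IsSMulRegular 𝕜 m) (a : AddCircle p) :
    {x : AddCircle p | m • x = a}.encard ≤ m := by
  rcases Set.eq_empty_or_nonempty {x : AddCircle p | m • x = a} with h | ⟨x₀, hx₀⟩
  · simp [h]
  calc {x : AddCircle p | m • x = a}.encard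
      ≤ ((x₀ + ·) '' {x : AddCircle p | m • x = 0}).encard := by
        refine Set.encard_le_encard fun x hx => ⟨x - x₀, ?_, add_sub_cancel x₀ x⟩
        simp_all [smul_sub]
    _ ≤ m := (Set.encard_image_le _ _).trans
      (AddCircle.card_torsion_le_of_isSMulRegular p m hm hreg)

lemma iterate_skewProduct {X G : Type*} [AddCommMonoid G] (g : X → X) (h : X → G) (n : ℕ)
    (w : X × G) : (fun w : X × G => (g w.1, w.2 + h w.1))^[n] w
      = (g^[n] w.1, w.2 + ∑ j ∈ Finset.range n, h (g^[j] w.1)) := by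
  induction n with
  | zero => simp
  | succ n ih => rw [Function.iterate_succ_apply', ih, Function.iterate_succ_apply',
      Finset.sum_range_succ, add_assoc]

lemma exists_ne_zero_mem_shear_image_cone_inter {a b b' t : ℝ} (ha : a ≠ 0)
    (h : |b - b'| ≤ 2 * t) :
    ∃ v ≠ ((0 : ℝ), (0 : ℝ)), v ∈ mulVec2 !![a, 0; b, 1] '' cone t ∩
      mulVec2 !![a, 0; b', 1] '' cone t := by
  have key : ∀ c c' : ℝ, |c - c'| ≤ 2 * t → (a, (c + c') / 2) ∈ mulVec2 !![a, 0; c, 1] '' cone t :=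
    fun c c' hc => ⟨(1, (c' - c) / 2), by simp [cone, abs_div, abs_sub_comm]; linarith,
      Prod.ext (by simp [mulVec2]) (by simp [mulVec2]; ring)⟩
  exact ⟨(a, (b + b') / 2), fun h0 => ha (congrArg Prod.fst h0), key b b' h,
    add_comm b b' ▸ key b' b (abs_sub_comm b b' ▸ h)⟩

def jacShear (k : ℕ) (τ₀ : ℝ → ℝ) : ℕ → S1 → ℝ
  | 0, _ => 0
  | n + 1, x => k * jacShear k τ₀ n (k • x) + deriv τ₀ (lift01 x) / (2 * Real.pi)

abbrev linTraj (k : ℕ) (τ₀ : ℝ → ℝ) (n : ℕ) (α : Fin n → ℕ) (p : ℝ × ℝ) : ℝ × ℝ :=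
  canTraj (id : Unit → Unit) (fun _ x => (k : ℝ) * x) (fun _ => τ₀) n α () p

section LinearBase

variable {k : ℕ} {τ₀ : ℝ → ℝ}

lemma circMap_mul_eq_nsmul (x : S1) : circMap (fun t => (k : ℝ) * t) x = k • x := by
  rw [circMap, ← nsmul_eq_mul, AddCircle.coe_nsmul, coe_lift01]

lemma exists_iterate_skewD_eq (n : ℕ) :
    ∃ c : S1 → S1, ∀ w : T2, (skewD k τ₀)^[n] w = ((k ^ n) • w.1, w.2 + c w.1) := by
  set h : S1 → S1 := fun x => ((τ₀ (lift01 x) / (2 * Real.pi) : ℝ) : S1)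
  have hskew : skewD k τ₀ = fun w : T2 => (k • w.1, w.2 + h w.1) :=
    funext fun w => Prod.ext (circMap_mul_eq_nsmul w.1) rfl
  refine ⟨fun x => ∑ j ∈ Finset.range n, h ((k • ·)^[j] x), fun w => ?_⟩
  rw [hskew, iterate_skewProduct, smul_iterate]

lemma encard_preimage_iterate_skewD_le (hk : k ≠ 0) (n : ℕ) (z : T2) :
    {w : T2 | (skewD k τ₀)^[n] w = z}.encard ≤ (k ^ n : ℕ) := by
  obtain ⟨c, hc⟩ := exists_iterate_skewD_eq (k := k) (τ₀ := τ₀) n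
  have hreg : IsSMulRegular ℝ (k ^ n) :=
    .of_right_eq_zero_of_smul fun _ => by simp [hk]
  refine (Set.encard_le_encard_of_injOn (f := Prod.fst) (t := {x | k ^ n • x = z.1}) ?_ ?_).trans
    (AddCircle.encard_nsmul_eq_le _ (by positivity) hreg _)
  · intro w hw
    simp only [Set.mem_ofPred_eq, hc] at hw ⊢
    rw [← hw]
  · intro w hw w' hw' h
    simp only [Set.mem_ofPred_eq, hc] at hw hw'
    have hsnd := congrArg Prod.snd (hw.trans hw'.symm)
    exact Prod.ext h (by simpa [h] using hsnd)

lemma finite_preimage_iterate_skewD (hk : k ≠ 0) (n : ℕ) (z : T2) :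
    {w : T2 | (skewD k τ₀)^[n] w = z}.Finite :=
  Set.finite_of_encard_le_coe (encard_preimage_iterate_skewD_le hk n z)

lemma exists_iterate_skewD_eq_of_nsmul_eq (n : ℕ) {x : S1} {z : T2} (hx : k ^ n • x = z.1) :
    ∃ w : T2, w.1 = x ∧ (skewD k τ₀)^[n] w = z := by
  obtain ⟨c, hc⟩ := exists_iterate_skewD_eq (k := k) (τ₀ := τ₀) n
  exact ⟨(x, z.2 - c x), rfl, by rw [hc]; exact Prod.ext hx (sub_add_cancel _ _)⟩

lemma notTransCount_le (hk : k ≠ 0) (R : ℝ) (n : ℕ) (z ζ : T2) :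
    notTransCount k τ₀ R n z ζ ≤ k ^ n := by
  obtain ⟨hfin, hcard⟩ :=
    Set.encard_le_coe_iff_finite_ncard_le.mp (encard_preimage_iterate_skewD_le (τ₀ := τ₀) hk n z)
  exact (Nat.card_mono hfin fun w hw => hw.1).trans hcard

lemma notTransCount_le_phiCount (hk : k ≠ 0) {R : ℝ} {n : ℕ} {z ζ : T2}
    (hζ : (skewD k τ₀)^[n] ζ = z) : notTransCount k τ₀ R n z ζ ≤ phiCount k τ₀ R n :=
  le_csSup ⟨k ^ n, by rintro _ ⟨z, ζ, -, rfl⟩; exact notTransCount_le hk R n z ζ⟩ ⟨z, ζ, hζ, rfl⟩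

lemma jacN_eq (n : ℕ) (x : S1) :
    jacN k τ₀ n x = !![(k : ℝ) ^ n, 0; jacShear k τ₀ n x, 1] := by
  induction n generalizing x with
  | zero => simp [jacN, jacShear, Matrix.one_fin_two]
  | succ n ih =>
    rw [jacN, ih, circMap_mul_eq_nsmul, jac1, Matrix.mul_fin_two, jacShear]
    ext i j
    fin_cases i <;> fin_cases j <;> simp [pow_succ, mul_comm]

lemma not_transversal_of_abs_jacShear_sub_le (hk : k ≠ 0) {R : ℝ} {n : ℕ} {ζ w : T2}
    (h : |jacShear k τ₀ n ζ.1 - jacShear k τ₀ n w.1| ≤ 2 * (R / ((k : ℝ) - 1))) :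
    ¬ Transversal k τ₀ R n ζ w := fun hT => by
  obtain ⟨v, hv0, hv⟩ := exists_ne_zero_mem_shear_image_cone_inter
    (pow_ne_zero n (Nat.cast_ne_zero.mpr hk)) h
  rw [← jacN_eq, ← jacN_eq] at hv
  exact hv0 (hT hv)

lemma canMap_mul (hk : k ≠ 0) (j : ℕ) (p : ℝ × ℝ) :
    canMap (fun x => (k : ℝ) * x) τ₀ j p
      = ((p.1 + j) / k, k * p.2 + deriv τ₀ ((p.1 + j) / k)) := by
  have hk' : (k : ℝ) ≠ 0 := Nat.cast_ne_zero.mpr hk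
  have hinv : Function.invFun (fun x => (k : ℝ) * x) (p.1 + j) = (p.1 + j) / k := by
    rw [eq_div_iff hk', mul_comm]
    exact Function.invFun_eq (f := fun x => (k : ℝ) * x) ⟨(p.1 + j) / k, mul_div_cancel₀ _ hk'⟩
  have hderiv : deriv (fun x => (k : ℝ) * x) ((p.1 + j) / k) = k := by simp
  rw [canMap, hinv, hderiv]

lemma linTraj_fst (hk : k ≠ 0) (n : ℕ) (α : Fin n → ℕ) (p : ℝ × ℝ) :
    (k : ℝ) ^ n * (linTraj k τ₀ n α p).1 = p.1 + ∑ i : Fin n, (α i : ℝ) * (k : ℝ) ^ (i : ℕ) := by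
  induction n with
  | zero => simp [canTraj]
  | succ n ih =>
    rw [linTraj, canTraj, id_eq, canMap_mul hk, Fin.sum_univ_castSucc]
    simp only [Fin.val_castSucc, Fin.val_last]
    rw [← add_assoc, ← ih (fun i => α i.castSucc)]
    field_simp
    ring

lemma nsmul_coe_linTraj_fst (hk : k ≠ 0) (n : ℕ) (α : Fin n → ℕ) (p : ℝ × ℝ) :
    k ^ n • ((linTraj k τ₀ n α p).1 : S1) = p.1 := by
  rw [← AddCircle.coe_nsmul, nsmul_eq_mul, Nat.cast_pow, linTraj_fst hk]
  exact_mod_cast coe_add_natCast p.1 (∑ i : Fin n, α i * k ^ (i : ℕ))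

lemma linTraj_snd (hk : k ≠ 0) (hper : Function.Periodic τ₀ 1) (n : ℕ) (α : Fin n → ℕ)
    (p : ℝ × ℝ) : (linTraj k τ₀ n α p).2
      = (k : ℝ) ^ n * p.2 + 2 * Real.pi * jacShear k τ₀ n (linTraj k τ₀ n α p).1 := by
  induction n with
  | zero => simp [canTraj, jacShear]
  | succ n ih =>
    set q := linTraj k τ₀ n (fun i => α i.castSucc) p
    have hshift : k • (((q.1 + α (Fin.last n)) / k : ℝ) : S1) = q.1 := by
      rw [← AddCircle.coe_nsmul, nsmul_eq_mul, mul_div_cancel₀ _ (Nat.cast_ne_zero.mpr hk),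
        coe_add_natCast]
    rw [linTraj, canTraj, id_eq, canMap_mul hk, jacShear, hshift, hper.deriv.apply_lift01, ih]
    field_simp
    ring

lemma injective_coe_linTraj_fst (hk : k ≠ 0) (n : ℕ) (p : ℝ × ℝ) :
    Function.Injective fun α : Fin n → Fin k => ((linTraj k τ₀ n (fun i => α i) p).1 : S1) := by
  have hkn : (0 : ℝ) < (k : ℝ) ^ n := by positivity
  have hfst : ∀ α : Fin n → Fin k,
      (linTraj k τ₀ n (fun i => α i) p).1 = (p.1 + finFunctionFinEquiv α) / (k : ℝ) ^ n := by
    intro α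
    rw [eq_div_iff hkn.ne', mul_comm, linTraj_fst hk, finFunctionFinEquiv_apply]
    push_cast
    rfl
  have hIco : ∀ α : Fin n → Fin k, (linTraj k τ₀ n (fun i => α i) p).1
      ∈ Set.Ico (p.1 / (k : ℝ) ^ n) (p.1 / (k : ℝ) ^ n + 1) := by
    intro α
    have hlt : ((finFunctionFinEquiv α : ℕ) : ℝ) < (k : ℝ) ^ n := by
      exact_mod_cast (finFunctionFinEquiv α).isLt
    rw [hfst, Set.mem_Ico, add_div, le_add_iff_nonneg_right, add_lt_add_iff_left,
      div_lt_one hkn]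
    exact ⟨by positivity, hlt⟩
  intro α β h
  have := (AddCircle.coe_eq_coe_iff_of_mem_Ico (hIco α) (hIco β)).mp h
  rw [hfst, hfst, div_left_inj' hkn.ne', add_right_inj] at this
  exact finFunctionFinEquiv.injective (Fin.val_injective (by exact_mod_cast this))

lemma abs_jacShear_sub_le_of_trapped (hk : k ≠ 0) (hper : Function.Periodic τ₀ 1) {Rκ : ℝ}
    {n : ℕ} {p : ℝ × ℝ} {α β : Fin n → ℕ} (hα : |(linTraj k τ₀ n α p).2| ≤ Rκ)
    (hβ : |(linTraj k τ₀ n β p).2| ≤ Rκ) :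
    |jacShear k τ₀ n (linTraj k τ₀ n β p).1 - jacShear k τ₀ n (linTraj k τ₀ n α p).1|
      ≤ Rκ / Real.pi := by
  have hdiff : 2 * Real.pi * (jacShear k τ₀ n (linTraj k τ₀ n β p).1
      - jacShear k τ₀ n (linTraj k τ₀ n α p).1)
        = (linTraj k τ₀ n β p).2 - (linTraj k τ₀ n α p).2 := by
    rw [linTraj_snd hk hper, linTraj_snd hk hper]
    ring
  rw [le_div_iff₀ Real.pi_pos]
  have := (abs_sub _ _).trans (add_le_add hβ hα)
  rw [← hdiff, abs_mul, abs_of_pos Real.two_pi_pos] at this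
  linarith

lemma trajCount_le_phiCount (hk : k ≠ 0) (hper : Function.Periodic τ₀ 1) {Rκ R : ℝ}
    (hR : Rκ / Real.pi ≤ 2 * (R / ((k : ℝ) - 1))) (n : ℕ) (p : ℝ × ℝ) :
    trajCount k (id : Unit → Unit) (fun _ x => (k : ℝ) * x) (fun _ => τ₀) Rκ n () p
      ≤ phiCount k τ₀ R n := by
  let Trapped := {α : Fin n → Fin k // |(linTraj k τ₀ n (fun i => α i) p).2| ≤ Rκ}
  rcases isEmpty_or_nonempty Trapped with h | ⟨β, hβ⟩
  · exact (Nat.card_of_isEmpty (α := Trapped)).trans_le (Nat.zero_le _)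
  let z : T2 := ((p.1 : S1), 0)
  choose w hw₁ hwz using fun α : Fin n → Fin k =>
    exists_iterate_skewD_eq_of_nsmul_eq (τ₀ := τ₀) (z := z) n
      (nsmul_coe_linTraj_fst hk n (fun i => α i) p)
  have hnt (α : Trapped) : ¬ Transversal k τ₀ R n (w β) (w α) :=
    not_transversal_of_abs_jacShear_sub_le hk <| by
      rw [hw₁, hw₁]
      exact (abs_jacShear_sub_le_of_trapped hk hper α.2 hβ).trans hR
  have : Finite {w' : T2 // (skewD k τ₀)^[n] w' = z ∧ ¬ Transversal k τ₀ R n (w β) w'} :=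
    ((finite_preimage_iterate_skewD hk n z).subset fun _ hw' => hw'.1).to_subtype
  calc Nat.card Trapped ≤ notTransCount k τ₀ R n z (w β) :=
        Nat.card_le_card_of_injective (fun α => ⟨w α, hwz α, hnt α⟩) fun α α' h =>
          Subtype.ext <| injective_coe_linTraj_fst hk n p <| by
            simpa only [hw₁] using congrArg (fun w' => w'.1.1) h
    _ ≤ phiCount k τ₀ R n := notTransCount_le_phiCount hk (hwz β)

end LinearBase

theorem stmt11_general
    (k : ℕ) (hk : 2 ≤ k) (τ₀ : ℝ → ℝ)
    (hτ₀per : Function.Periodic τ₀ 1)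
    (Rκ : ℝ)
    (R : ℝ)
    (hR : ((⨆ x : ℝ, |deriv τ₀ x|) + ((k : ℝ) - 1) * Rκ / 2) / Real.pi ≤ R) :
    ∀ n : ℕ, 1 ≤ n →
      (NcountD k (fun x => (k : ℝ) * x) τ₀ Rκ n : ℝ) ≤ (k : ℝ) ^ n * phiR k τ₀ R n := by
  intro n _
  have hk₁ : (0 : ℝ) < (k : ℝ) - 1 := by
    have : (2 : ℝ) ≤ k := by exact_mod_cast hk
    linarith
  have hsup : 0 ≤ ⨆ x : ℝ, |deriv τ₀ x| := Real.iSup_nonneg fun x => abs_nonneg _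
  have hRκ : Rκ / Real.pi ≤ 2 * (R / ((k : ℝ) - 1)) := by
    rw [← mul_div_assoc, le_div_iff₀ hk₁]
    calc Rκ / Real.pi * ((k : ℝ) - 1) = 2 * (((k : ℝ) - 1) * Rκ / 2 / Real.pi) := by ring
      _ ≤ 2 * R := by gcongr; exact le_trans (by gcongr; linarith) hR
  have hN : NcountD k (fun x => (k : ℝ) * x) τ₀ Rκ n ≤ phiCount k τ₀ R n :=
    csSup_le' fun _ ⟨p, _, hp⟩ => hp ▸ trajCount_le_phiCount (by omega) hτ₀per hRκ n p
  rw [phiR, mul_div_cancel₀ _ (by positivity)]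
  exact_mod_cast hN

theorem stmt11
    (k : ℕ) (hk : 2 ≤ k) (τ₀ : ℝ → ℝ)
    (hτ₀smooth : ContDiff ℝ (⊤ : ℕ∞) τ₀) (hτ₀per : Function.Periodic τ₀ 1)
    (Cτ : ℝ) (hCτ : ∀ x, |deriv τ₀ x| ≤ Cτ)
    (Rκ : ℝ) (hRκ : Cτ / (((k : ℝ) + 1) / 2 - ((((k : ℝ) + 1) / 2) + 1) / 2) ≤ Rκ)
    (R : ℝ)
    (hR : ((⨆ x : ℝ, |deriv τ₀ x|) + ((k : ℝ) - 1) * Rκ / 2) / Real.pi ≤ R) :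
    ∀ n : ℕ, 1 ≤ n →
      (NcountD k (fun x => (k : ℝ) * x) τ₀ Rκ n : ℝ) ≤ (k : ℝ) ^ n * phiR k τ₀ R n :=
  stmt11_general k hk τ₀ hτ₀per Rκ R hR

end RPE
end
end

section
/- For each 0 ≤ ε < ε₀ the series S_ε(ω,x) = −Σ_{j=1}^∞ τ_ε'(θ^{−j}ω, G_ε^{(j)}(θ^{−j}ω,x)) · dG_ε^{(j)}(θ^{−j}ω,x)/dx converges ℙ-almost surely uniformly in x ∈ ℝ, satisfies esssup_ω sup_x |S_ε(ω,x)| ≤ C_τ Σ_{j=1}^∞ λ^{−j}, and solves the cohomological equation S_ε(ω, G_ε(ω,x)) = E_ε'(ω, G_ε(ω,x)) S_ε(θω, x) + τ_ε'(ω, G_ε(ω,x)) for all x ∈ ℝ, ℙ-almost surely; consequently the lifted map F̃(ε;ω) sends (x, S_ε(θω,x)) to (x', S_ε(ω,x')) with x' = G_ε(ω,x), and more generally F̃^{(n)}(ε;ω)(x, S_ε(θⁿω,x)) = (G_ε^{(n)}(ω,x), S_ε(ω, G_ε^{(n)}(ω,x))). -/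
open MeasureTheory Filter Topology
open scoped ENNReal

noncomputable section

namespace RPE

variable {Ω : Type*}

/-!
Since `G(ω)` contracts by `λ⁻¹`, the `j`-th term of the series defining `S(ω,·)` is bounded by
`Cτ λ^{-j}` uniformly in `x`, which gives uniform convergence and the sup bound. For the
cohomological equation, split off the first term of the series for `S(θω, x)`; by the chain rule
through `G^{(j+1)}(θ^{-j}ω) = G^{(j)}(θ^{-j}ω) ∘ G(ω)`, the remaining terms add up to
`S(ω, G(ω,x)) / E'(ω, G(ω,x))`. Invariance of the graph of `S` under `F̃^{(n)}` follows by
induction on `n`. Everything is proved on the set of `ω` whose whole two-sided orbit satisfies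
the almost sure bounds, a set of full measure because `θ` and `θ⁻¹` preserve `ℙ`.
-/

section ExpandingMap

variable {f : ℝ → ℝ} {lam : ℝ}

theorem surjective_of_le_deriv (hf : Differentiable ℝ f) (hlam : 0 < lam)
    (hd : ∀ x, lam ≤ deriv f x) : Function.Surjective f := by
  have grows : ∀ ⦃x y⦄, x ≤ y → lam * (y - x) ≤ f y - f x :=
    mul_sub_le_image_sub_of_le_deriv hf hd
  refine hf.continuous.surjective ?_ ?_
  · refine tendsto_atTop_mono' atTop ?_
      (tendsto_atTop_add_const_left _ (f 0) (tendsto_id.const_mul_atTop hlam))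
    filter_upwards [eventually_ge_atTop 0] with x hx
    simp only [id]
    linarith [grows hx]
  · refine tendsto_atBot_mono' atBot ?_
      (tendsto_atBot_add_const_left _ (f 0) (tendsto_id.const_mul_atBot hlam))
    filter_upwards [eventually_le_atBot 0] with x hx
    simp only [id]
    linarith [grows hx]

theorem hasDerivAt_invFun_of_le_deriv (hf : Differentiable ℝ f) (hlam : 0 < lam)
    (hd : ∀ x, lam ≤ deriv f x) (y : ℝ) :
    HasDerivAt (Function.invFun f) (deriv f (Function.invFun f y))⁻¹ y := by
  have hmono : StrictMono f := strictMono_of_deriv_pos fun x => hlam.trans_le (hd x)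
  have hright : Function.RightInverse (Function.invFun f) f :=
    Function.rightInverse_invFun (surjective_of_le_deriv hf hlam hd)
  have hinv_mono : Monotone (Function.invFun f) := fun y₁ y₂ h => by
    rwa [← hmono.le_iff_le, hright y₁, hright y₂]
  have hinv_cont : Continuous (Function.invFun f) :=
    hinv_mono.continuous_of_surjective (Function.invFun_surjective hmono.injective)
  exact HasDerivAt.of_local_left_inverse hinv_cont.continuousAt (hf _).hasDerivAt
    (hlam.trans_le (hd _)).ne' (Eventually.of_forall hright)

end ExpandingMap

section BackwardCocycle

variable {Ω : Type*} {θ : Ω → Ω} {E : Ω → ℝ → ℝ}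

theorem iterG_succ_apply' (n : ℕ) (ω : Ω) (x : ℝ) :
    iterG θ E (n + 1) ω x = iterG θ E n ω (Function.invFun (E (θ^[n] ω)) x) := by
  induction n generalizing ω with
  | zero => rfl
  | succ n ih =>
    change Function.invFun (E ω) (iterG θ E (n + 1) (θ ω) x) = _
    rw [ih, ← Function.iterate_succ_apply]
    rfl

theorem hasDerivAt_iterG {A : Set Ω} {lam : ℝ} (hθA : Set.MapsTo θ A A)
    (hE : ∀ ω, Differentiable ℝ (E ω)) (hlam : 0 < lam)
    (hexp : ∀ ω ∈ A, ∀ x, lam ≤ deriv (E ω) x) (n : ℕ) {ω : Ω} (hω : ω ∈ A) (x : ℝ) :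
    HasDerivAt (iterG θ E n ω) (deriv (iterG θ E n ω) x) x ∧
      0 < deriv (iterG θ E n ω) x ∧ deriv (iterG θ E n ω) x ≤ lam⁻¹ ^ n := by
  induction n generalizing ω with
  | zero => simpa [iterG] using hasDerivAt_id' x
  | succ n ih =>
    obtain ⟨hd, hd_pos, hd_le⟩ := ih (hθA hω)
    have hy : lam ≤ deriv (E ω) (iterG θ E (n + 1) ω x) := hexp ω hω _
    have hcomp : HasDerivAt (iterG θ E (n + 1) ω)
        ((deriv (E ω) (iterG θ E (n + 1) ω x))⁻¹ * deriv (iterG θ E n (θ ω)) x) x :=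
      (hasDerivAt_invFun_of_le_deriv (hE ω) hlam (hexp ω hω) _).comp x hd
    rw [hcomp.deriv, pow_succ']
    exact ⟨hcomp, mul_pos (inv_pos.2 (hlam.trans_le hy)) hd_pos,
      mul_le_mul (inv_anti₀ hlam hy) hd_le hd_pos.le (inv_nonneg.2 hlam.le)⟩

end BackwardCocycle

theorem hasSum_mul_inv_pow_succ {lam : ℝ} (hlam : 1 < lam) (C : ℝ) :
    HasSum (fun j : ℕ => C * lam⁻¹ ^ (j + 1)) (C * ∑' j : ℕ, (1 / lam) ^ (j + 1)) := by
  have hgeom := summable_geometric_of_lt_one (inv_nonneg.2 (one_pos.trans hlam).le)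
    (inv_lt_one_of_one_lt₀ hlam)
  simpa only [one_div] using ((summable_nat_add_iff 1).2 hgeom).hasSum.mul_left C

section StableSection

variable {Ω : Type*} {θ θinv : Ω → Ω} {E τ : Ω → ℝ → ℝ} {lam Cτ : ℝ} {A : Set Ω} {ω : Ω}

structure ExpandingOn (θ θinv : Ω → Ω) (E τ : Ω → ℝ → ℝ) (lam Cτ : ℝ) (A : Set Ω) : Prop where
  mapsTo : Set.MapsTo θ A A
  mapsTo_inv : Set.MapsTo θinv A A
  one_lt : 1 < lam
  differentiable : ∀ ω, Differentiable ℝ (E ω)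
  le_deriv : ∀ ω ∈ A, ∀ x, lam ≤ deriv (E ω) x
  abs_deriv_le : ∀ ω ∈ A, ∀ x, |deriv (τ ω) x| ≤ Cτ

def stableTerm (θ θinv : Ω → Ω) (E τ : Ω → ℝ → ℝ) (ω : Ω) (j : ℕ) (x : ℝ) : ℝ :=
  deriv (τ (θinv^[j + 1] ω)) (iterG θ E (j + 1) (θinv^[j + 1] ω) x)
    * deriv (iterG θ E (j + 1) (θinv^[j + 1] ω)) x

theorem stableS_eq_neg_tsum (ω : Ω) (x : ℝ) :
    stableS θ θinv E τ ω x = -∑' j, stableTerm θ θinv E τ ω j x := rfl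

namespace ExpandingOn

theorem lam_pos (h : ExpandingOn θ θinv E τ lam Cτ A) : 0 < lam := one_pos.trans h.one_lt

theorem hasDerivAt_invFun (h : ExpandingOn θ θinv E τ lam Cτ A) (hω : ω ∈ A) (x : ℝ) :
    HasDerivAt (Function.invFun (E ω)) (deriv (E ω) (Function.invFun (E ω) x))⁻¹ x :=
  hasDerivAt_invFun_of_le_deriv (h.differentiable ω) h.lam_pos (h.le_deriv ω hω) x

theorem abs_stableTerm_le (h : ExpandingOn θ θinv E τ lam Cτ A) (hω : ω ∈ A) (j : ℕ) (x : ℝ) :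
    |stableTerm θ θinv E τ ω j x| ≤ Cτ * lam⁻¹ ^ (j + 1) := by
  have hω' := h.mapsTo_inv.iterate (j + 1) hω
  obtain ⟨-, hpos, hle⟩ :=
    hasDerivAt_iterG h.mapsTo h.differentiable h.lam_pos h.le_deriv (j + 1) hω' x
  rw [stableTerm, abs_mul, abs_of_pos hpos]
  have hτ := h.abs_deriv_le _ hω' (iterG θ E (j + 1) (θinv^[j + 1] ω) x)
  calc _ ≤ |deriv (τ (θinv^[j + 1] ω)) (iterG θ E (j + 1) (θinv^[j + 1] ω) x)|
        * lam⁻¹ ^ (j + 1) := mul_le_mul_of_nonneg_left hle (abs_nonneg _)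
    _ ≤ Cτ * lam⁻¹ ^ (j + 1) :=
        mul_le_mul_of_nonneg_right hτ (pow_nonneg (inv_nonneg.2 h.lam_pos.le) _)

theorem summable_stableTerm (h : ExpandingOn θ θinv E τ lam Cτ A) (hω : ω ∈ A) (x : ℝ) :
    Summable (stableTerm θ θinv E τ ω · x) :=
  .of_norm_bounded (hasSum_mul_inv_pow_succ h.one_lt Cτ).summable fun j =>
    (Real.norm_eq_abs _).trans_le (h.abs_stableTerm_le hω j x)

theorem tendstoUniformly_stableS (h : ExpandingOn θ θinv E τ lam Cτ A) (hω : ω ∈ A) :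
    TendstoUniformly (fun N x => -∑ j ∈ Finset.range N, stableTerm θ θinv E τ ω j x)
      (stableS θ θinv E τ ω) atTop :=
  (tendstoUniformly_tsum_nat (hasSum_mul_inv_pow_succ h.one_lt Cτ).summable
    (h.abs_stableTerm_le hω)).neg

theorem abs_stableS_le (h : ExpandingOn θ θinv E τ lam Cτ A) (hω : ω ∈ A) (x : ℝ) :
    |stableS θ θinv E τ ω x| ≤ Cτ * ∑' j : ℕ, (1 / lam) ^ (j + 1) := by
  rw [stableS_eq_neg_tsum, abs_neg, ← Real.norm_eq_abs]
  exact tsum_of_norm_bounded (hasSum_mul_inv_pow_succ h.one_lt Cτ) (h.abs_stableTerm_le hω · x)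

theorem stableTerm_apply_zero (h : ExpandingOn θ θinv E τ lam Cτ A)
    (hl : Function.LeftInverse θinv θ) (hω : ω ∈ A) (x : ℝ) :
    stableTerm θ θinv E τ (θ ω) 0 x
      = deriv (τ ω) (Function.invFun (E ω) x) * (deriv (E ω) (Function.invFun (E ω) x))⁻¹ := by
  have hθ : θinv^[0 + 1] (θ ω) = ω := hl ω
  have hiterG : iterG θ E (0 + 1) ω = Function.invFun (E ω) := rfl
  rw [stableTerm, hθ, hiterG, (h.hasDerivAt_invFun hω x).deriv]

theorem stableTerm_apply_succ (h : ExpandingOn θ θinv E τ lam Cτ A)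
    (hl : Function.LeftInverse θinv θ) (hr : Function.RightInverse θinv θ) (hω : ω ∈ A)
    (j : ℕ) (x : ℝ) :
    stableTerm θ θinv E τ (θ ω) (j + 1) x
      = stableTerm θ θinv E τ ω j (Function.invFun (E ω) x)
        * (deriv (E ω) (Function.invFun (E ω) x))⁻¹ := by
  set ω' := θinv^[j + 1] ω
  have hθ : θinv^[j + 1 + 1] (θ ω) = ω' := by rw [Function.iterate_succ_apply, hl ω]
  have hiterG : iterG θ E (j + 1 + 1) ω' = iterG θ E (j + 1) ω' ∘ Function.invFun (E ω) := by
    funext z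
    rw [iterG_succ_apply', hr.iterate (j + 1) ω, Function.comp_apply]
  have hcomp := (hasDerivAt_iterG h.mapsTo h.differentiable h.lam_pos h.le_deriv (j + 1)
    (h.mapsTo_inv.iterate (j + 1) hω) (Function.invFun (E ω) x)).1.comp x
    (h.hasDerivAt_invFun hω x)
  rw [stableTerm, stableTerm, hθ, hiterG, hcomp.deriv, Function.comp_apply]
  ring

theorem stableS_invFun (h : ExpandingOn θ θinv E τ lam Cτ A)
    (hl : Function.LeftInverse θinv θ) (hr : Function.RightInverse θinv θ) (hω : ω ∈ A)
    (x : ℝ) :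
    stableS θ θinv E τ ω (Function.invFun (E ω) x)
      = deriv (E ω) (Function.invFun (E ω) x) * stableS θ θinv E τ (θ ω) x
        + deriv (τ ω) (Function.invFun (E ω) x) := by
  have hB : deriv (E ω) (Function.invFun (E ω) x) ≠ 0 :=
    (h.lam_pos.trans_le (h.le_deriv ω hω _)).ne'
  rw [stableS_eq_neg_tsum, stableS_eq_neg_tsum,
    (h.summable_stableTerm (h.mapsTo hω) x).tsum_eq_zero_add, h.stableTerm_apply_zero hl hω,
    tsum_congr (h.stableTerm_apply_succ hl hr hω · x), tsum_mul_right]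
  field_simp
  ring

theorem iterLiftF_stableS (h : ExpandingOn θ θinv E τ lam Cτ A)
    (hl : Function.LeftInverse θinv θ) (hr : Function.RightInverse θinv θ) (n : ℕ)
    (hω : ω ∈ A) (x : ℝ) :
    iterLiftF θ E τ n ω (x, stableS θ θinv E τ (θ^[n] ω) x)
      = (iterG θ E n ω x, stableS θ θinv E τ ω (iterG θ E n ω x)) := by
  induction n generalizing ω with
  | zero => rfl
  | succ n ih =>
    change liftF (E ω) (τ ω)
      (iterLiftF θ E τ n (θ ω) (x, stableS θ θinv E τ (θ^[n] (θ ω)) x)) = _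
    rw [ih (h.mapsTo hω)]
    exact Prod.ext rfl (h.stableS_invFun hl hr hω _).symm

end ExpandingOn

end StableSection

section OrbitCore

variable {Ω : Type*} {θ θinv : Ω → Ω} {B : Set Ω}

def orbitCore (θ θinv : Ω → Ω) (B : Set Ω) : Set Ω :=
  {ω | ∀ m, θ^[m] ω ∈ B ∧ θinv^[m] ω ∈ B}

theorem orbitCore_subset : orbitCore θ θinv B ⊆ B := fun _ hω => (hω 0).1

theorem orbitCore_comm : orbitCore θ θinv B = orbitCore θinv θ B :=
  Set.ext fun _ => forall_congr' fun _ => and_comm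

theorem mapsTo_orbitCore (hl : Function.LeftInverse θinv θ) :
    Set.MapsTo θ (orbitCore θ θinv B) (orbitCore θ θinv B) := by
  intro ω hω m
  refine ⟨(hω (m + 1)).1, ?_⟩
  cases m with
  | zero => exact (hω 1).1
  | succ m => rw [Function.iterate_succ_apply, hl ω]; exact (hω m).2

theorem ae_mem_orbitCore [MeasurableSpace Ω] {P : Measure Ω} (hθ : MeasurePreserving θ P P)
    (hθinv : MeasurePreserving θinv P P) (hB : ∀ᵐ ω ∂P, ω ∈ B) :
    ∀ᵐ ω ∂P, ω ∈ orbitCore θ θinv B :=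
  ae_all_iff.2 fun m =>
    ((hθ.iterate m).quasiMeasurePreserving.ae hB).and
      ((hθinv.iterate m).quasiMeasurePreserving.ae hB)

end OrbitCore

theorem stmt19_general
    {Ω : Type*} [MeasurableSpace Ω]
    (P : Measure Ω)
    (θ : Ω → Ω) (hθ : MeasurePreserving θ P P)
    (θinv : Ω → Ω) (hθinv₁ : Function.LeftInverse θinv θ)
    (hθinv₂ : Function.RightInverse θinv θ) (hθinvmeas : Measurable θinv)
    (E τ : ℝ → Ω → ℝ → ℝ)
    (hEsmooth : ∀ ε ω, 0 ≤ ε → ContDiff ℝ (⊤ : ℕ∞) (E ε ω))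
    (ε₀ lam : ℝ) (hlam : 1 < lam)
    (hexp : ∀ ε, 0 ≤ ε → ε < ε₀ → ∀ᵐ ω ∂P, ∀ x, lam ≤ deriv (E ε ω) x)
    (Cτ : ℝ)
    (hCτ : ∀ ε, 0 ≤ ε → ε < ε₀ → ∀ᵐ ω ∂P, ∀ x, |deriv (τ ε ω) x| ≤ Cτ) :
    ∀ ε, 0 ≤ ε → ε < ε₀ →
      (∀ᵐ ω ∂P, TendstoUniformly
        (fun N : ℕ => fun x : ℝ => -(∑ j ∈ Finset.range N,
          deriv (τ ε (θinv^[j + 1] ω)) (iterG θ (E ε) (j + 1) (θinv^[j + 1] ω) x)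
            * deriv (fun y => iterG θ (E ε) (j + 1) (θinv^[j + 1] ω) y) x))
        (stableS θ θinv (E ε) (τ ε) ω) atTop) ∧
      (∀ᵐ ω ∂P, ∀ x : ℝ,
        |stableS θ θinv (E ε) (τ ε) ω x| ≤ Cτ * ∑' j : ℕ, (1 / lam) ^ (j + 1)) ∧
      (∀ᵐ ω ∂P, ∀ x : ℝ,
        stableS θ θinv (E ε) (τ ε) ω (Function.invFun (E ε ω) x)
          = deriv (E ε ω) (Function.invFun (E ε ω) x)
              * stableS θ θinv (E ε) (τ ε) (θ ω) x
            + deriv (τ ε ω) (Function.invFun (E ε ω) x)) ∧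
      (∀ᵐ ω ∂P, ∀ n : ℕ, ∀ x : ℝ,
        iterLiftF θ (E ε) (τ ε) n ω (x, stableS θ θinv (E ε) (τ ε) (θ^[n] ω) x)
          = (iterG θ (E ε) n ω x,
              stableS θ θinv (E ε) (τ ε) ω (iterG θ (E ε) n ω x))) := by
  intro ε hε hεlt
  let B := {ω | (∀ x, lam ≤ deriv (E ε ω) x) ∧ ∀ x, |deriv (τ ε ω) x| ≤ Cτ}
  let e : Ω ≃ᵐ Ω := ⟨⟨θ, θinv, hθinv₁, hθinv₂⟩, hθ.measurable, hθinvmeas⟩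
  have hA : ∀ᵐ ω ∂P, ω ∈ orbitCore θ θinv B :=
    ae_mem_orbitCore hθ (hθ.symm e) ((hexp ε hε hεlt).and (hCτ ε hε hεlt))
  have h : ExpandingOn θ θinv (E ε) (τ ε) lam Cτ (orbitCore θ θinv B) :=
    { mapsTo := mapsTo_orbitCore hθinv₁
      mapsTo_inv := orbitCore_comm (B := B) ▸ mapsTo_orbitCore hθinv₂
      one_lt := hlam
      differentiable := fun ω => (hEsmooth ε ω hε).differentiable (by simp)
      le_deriv := fun _ hω => (orbitCore_subset hω).1
      abs_deriv_le := fun _ hω => (orbitCore_subset hω).2 }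
  refine ⟨?_, ?_, ?_, ?_⟩ <;> filter_upwards [hA] with ω hω
  · exact h.tendstoUniformly_stableS hω
  · exact h.abs_stableS_le hω
  · exact h.stableS_invFun hθinv₁ hθinv₂ hω
  · exact fun n => h.iterLiftF_stableS hθinv₁ hθinv₂ n hω

theorem stmt19
    {Ω : Type*} [MeasurableSpace Ω]
    (k : ℕ) (hk : 2 ≤ k)
    (P : Measure Ω) [IsProbabilityMeasure P]
    (θ : Ω → Ω) (hθ : MeasurePreserving θ P P)
    (θinv : Ω → Ω) (hθinv₁ : Function.LeftInverse θinv θ)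
    (hθinv₂ : Function.RightInverse θinv θ) (hθinvmeas : Measurable θinv)
    (E τ : ℝ → Ω → ℝ → ℝ)
    (hEsmooth : ∀ ε ω, 0 ≤ ε → ContDiff ℝ (⊤ : ℕ∞) (E ε ω))
    (hElift : ∀ ε ω x, E ε ω (x + 1) = E ε ω x + k)
    (hτsmooth : ∀ ε ω, 0 ≤ ε → ContDiff ℝ (⊤ : ℕ∞) (τ ε ω))
    (hτper : ∀ ε ω, Function.Periodic (τ ε ω) 1)
    (ε₀ lam : ℝ) (hε₀ : 0 < ε₀) (hlam : 1 < lam)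
    (hexp : ∀ ε, 0 ≤ ε → ε < ε₀ → ∀ᵐ ω ∂P, ∀ x, lam ≤ deriv (E ε ω) x)
    (Cτ : ℝ) (hCτpos : 0 < Cτ)
    (hCτ : ∀ ε, 0 ≤ ε → ε < ε₀ → ∀ᵐ ω ∂P, ∀ x, |deriv (τ ε ω) x| ≤ Cτ) :
    ∀ ε, 0 ≤ ε → ε < ε₀ →
      (∀ᵐ ω ∂P, TendstoUniformly
        (fun N : ℕ => fun x : ℝ => -(∑ j ∈ Finset.range N,
          deriv (τ ε (θinv^[j + 1] ω)) (iterG θ (E ε) (j + 1) (θinv^[j + 1] ω) x)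
            * deriv (fun y => iterG θ (E ε) (j + 1) (θinv^[j + 1] ω) y) x))
        (stableS θ θinv (E ε) (τ ε) ω) atTop) ∧
      (∀ᵐ ω ∂P, ∀ x : ℝ,
        |stableS θ θinv (E ε) (τ ε) ω x| ≤ Cτ * ∑' j : ℕ, (1 / lam) ^ (j + 1)) ∧
      (∀ᵐ ω ∂P, ∀ x : ℝ,
        stableS θ θinv (E ε) (τ ε) ω (Function.invFun (E ε ω) x)
          = deriv (E ε ω) (Function.invFun (E ε ω) x)
              * stableS θ θinv (E ε) (τ ε) (θ ω) x
            + deriv (τ ε ω) (Function.invFun (E ε ω) x)) ∧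
      (∀ᵐ ω ∂P, ∀ n : ℕ, ∀ x : ℝ,
        iterLiftF θ (E ε) (τ ε) n ω (x, stableS θ θinv (E ε) (τ ε) (θ^[n] ω) x)
          = (iterG θ (E ε) n ω x,
              stableS θ θinv (E ε) (τ ε) ω (iterG θ (E ε) n ω x))) :=
  stmt19_general P θ hθ θinv hθinv₁ hθinv₂ hθinvmeas E τ hEsmooth ε₀ lam hlam hexp Cτ hCτ

end RPE
end
end
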